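/- arXiv:2305.18420 — 8 statements merged into one kernel-verified Lean document; each statement's English description precedes it below -/
import Mathlib

section
/- Let μ be a probability measure on a finite set Y and μ_n any probability measure with μ_n ≪ μ. Then |sup_{α≥0} f(μ,u,α) - sup_{α≥0} f(μ_n,u,α)| ≤ 2 · span_μ(u), where span_μ(u) = inf_{κ∈ℝ} ‖u - κ‖_{L^∞(μ)}. -/
open Real

/-- The KL dual functional on a finite space. -/
noncomputable def fdual {Y : Type*} [Fintype Y] (ν u : Y → ℝ) (δ α : ℝ) : ℝ :=
  if α = 0 then sInf (u '' {y | ν y ≠ 0})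
  else -α * Real.log (∑ y, ν y * Real.exp (-u y / α)) - α * δ

/-- The `L^∞(μ)` norm of `u` on a finite space. -/
noncomputable def linfNorm {Y : Type*} [Fintype Y] (μ u : Y → ℝ) : ℝ :=
  sSup ((fun y => |u y|) '' {y | μ y ≠ 0})

/-- The span seminorm `span_μ(u) = inf_{κ} ‖u - κ‖_{L^∞(μ)}`. -/
noncomputable def spanNorm {Y : Type*} [Fintype Y] (μ u : Y → ℝ) : ℝ :=
  sInf (Set.range fun κ : ℝ => linfNorm μ (fun y => u y - κ))

lemma exists_ne_zero_of_sum_one {Y : Type*} [Fintype Y] (ν : Y → ℝ)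
    (h : ∑ y, ν y = 1) : ∃ y, ν y ≠ 0 := by
  by_contra hc
  push_neg at hc
  simp [hc] at h

/-- Both suprema lie in `[m, M]`. -/
lemma fdual_sup_bounds {Y : Type*} [Fintype Y] (μ ν u : Y → ℝ) (δ : ℝ) (hδ : 0 < δ)
    (hν0 : ∀ y, 0 ≤ ν y) (hν1 : ∑ y, ν y = 1)
    (hsub : ∀ y, μ y = 0 → ν y = 0)
    (m M : ℝ) (hm : ∀ y, μ y ≠ 0 → m ≤ u y) (hM : ∀ y, μ y ≠ 0 → u y ≤ M) :
    m ≤ sSup ((fun α => fdual ν u δ α) '' Set.Ici 0) ∧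
      sSup ((fun α => fdual ν u δ α) '' Set.Ici 0) ≤ M := by
  obtain ⟨yν, hyν⟩ := exists_ne_zero_of_sum_one ν hν1
  have hμyν : μ yν ≠ 0 := fun h => hyν (hsub _ h)
  have hsupp : ∀ y, ν y ≠ 0 → μ y ≠ 0 := fun y hy h => hy (hsub _ h)
  have hfinν : (u '' {y | ν y ≠ 0}).Finite := (Set.toFinite _).image _
  -- every value of fdual is ≤ M
  have hub : ∀ α, 0 ≤ α → fdual ν u δ α ≤ M := by
    intro α hα
    rcases eq_or_lt_of_le hα with h0 | h0
    · rw [fdual, if_pos h0.symm]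
      exact le_trans (csInf_le hfinν.bddBelow ⟨yν, hyν, rfl⟩) (hM _ hμyν)
    · rw [fdual, if_neg (ne_of_gt h0)]
      have hZ : Real.exp (-M / α) ≤ ∑ y, ν y * Real.exp (-u y / α) := by
        calc Real.exp (-M / α) = ∑ y, ν y * Real.exp (-M / α) := by
              rw [← Finset.sum_mul, hν1, one_mul]
          _ ≤ ∑ y, ν y * Real.exp (-u y / α) := by
              apply Finset.sum_le_sum
              intro y _
              rcases eq_or_ne (ν y) 0 with h | h
              · simp [h]
              · apply mul_le_mul_of_nonneg_left _ (hν0 y)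
                apply Real.exp_le_exp.mpr
                exact div_le_div_of_nonneg_right (neg_le_neg (hM _ (hsupp _ h))) h0.le
      have hlog : -M / α ≤ Real.log (∑ y, ν y * Real.exp (-u y / α)) := by
        have := Real.log_le_log (Real.exp_pos _) hZ
        rwa [Real.log_exp] at this
      have h1 : -α * Real.log (∑ y, ν y * Real.exp (-u y / α)) ≤ M := by
        have := mul_le_mul_of_nonneg_left hlog (le_of_lt h0)
        rw [mul_div_cancel₀ _ (ne_of_gt h0)] at this
        nlinarith
      nlinarith
  have hbdd : BddAbove ((fun α => fdual ν u δ α) '' Set.Ici 0) :=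
    ⟨M, by rintro x ⟨α, hα, rfl⟩; exact hub α hα⟩
  constructor
  · have h0mem : fdual ν u δ 0 ∈ (fun α => fdual ν u δ α) '' Set.Ici 0 :=
      ⟨0, Set.self_mem_Ici, rfl⟩
    have : m ≤ fdual ν u δ 0 := by
      rw [fdual, if_pos rfl]
      have hne : (u '' {y | ν y ≠ 0}).Nonempty := ⟨u yν, yν, hyν, rfl⟩
      apply le_csInf hne
      rintro x ⟨y, hy, rfl⟩
      exact hm _ (hsupp _ hy)
    exact le_trans this (le_csSup hbdd h0mem)
  · have hne : ((fun α => fdual ν u δ α) '' Set.Ici 0).Nonempty :=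
      ⟨fdual ν u δ 0, 0, Set.self_mem_Ici, rfl⟩
    apply csSup_le hne
    rintro x ⟨α, hα, rfl⟩
    exact hub α hα

/-- `|sup_{α≥0} f(μ,u,α) - sup_{α≥0} f(μₙ,u,α)| ≤ 2 span_μ(u)` whenever `μₙ ≪ μ`. -/
theorem dual_sup_diff_bound {Y : Type*} [Fintype Y] [Nonempty Y]
    (μ μn u : Y → ℝ) (δ : ℝ) (hδ : 0 < δ)
    (hμ0 : ∀ y, 0 ≤ μ y) (hμ1 : ∑ y, μ y = 1)
    (hn0 : ∀ y, 0 ≤ μn y) (hn1 : ∑ y, μn y = 1)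
    (hac : ∀ y, μ y = 0 → μn y = 0) :
    |sSup ((fun α => fdual μ u δ α) '' Set.Ici 0) -
        sSup ((fun α => fdual μn u δ α) '' Set.Ici 0)| ≤ 2 * spanNorm μ u := by
  classical
  set s : Set ℝ := u '' {y | μ y ≠ 0} with hs
  have hsfin : s.Finite := (Set.toFinite _).image _
  obtain ⟨y0, hy0⟩ := exists_ne_zero_of_sum_one μ hμ1
  have hsne : s.Nonempty := ⟨u y0, y0, hy0, rfl⟩
  set m := sInf s with hm
  set M := sSup s with hM
  have hmle : ∀ y, μ y ≠ 0 → m ≤ u y := fun y hy =>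
    csInf_le hsfin.bddBelow ⟨y, hy, rfl⟩
  have hMle : ∀ y, μ y ≠ 0 → u y ≤ M := fun y hy =>
    le_csSup hsfin.bddAbove ⟨y, hy, rfl⟩
  obtain ⟨ym, hym, hum⟩ := hsne.csInf_mem hsfin
  obtain ⟨yM, hyM, huM⟩ := hsne.csSup_mem hsfin
  have h1 := fdual_sup_bounds μ μ u δ hδ hμ0 hμ1 (fun y h => h) m M hmle hMle
  have h2 := fdual_sup_bounds μ μn u δ hδ hn0 hn1 hac m M hmle hMle
  have hspan : (M - m) / 2 ≤ spanNorm μ u := by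
    have hne : (Set.range fun κ : ℝ => linfNorm μ (fun y => u y - κ)).Nonempty :=
      ⟨linfNorm μ (fun y => u y - 0), 0, rfl⟩
    apply le_csInf hne
    rintro x ⟨κ, rfl⟩
    have hfin : ((fun y => |u y - κ|) '' {y | μ y ≠ 0}).Finite := (Set.toFinite _).image _
    have hA : |u yM - κ| ≤ linfNorm μ (fun y => u y - κ) :=
      le_csSup hfin.bddAbove ⟨yM, hyM, rfl⟩
    have hB : |u ym - κ| ≤ linfNorm μ (fun y => u y - κ) :=
      le_csSup hfin.bddAbove ⟨ym, hym, rfl⟩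
    have hA' : M - κ ≤ |u yM - κ| := huM ▸ le_abs_self _
    have hB' : κ - m ≤ |u ym - κ| := by
      rw [hum, abs_sub_comm]
      exact le_abs_self _
    linarith
  have hmM : m ≤ M := le_trans (hmle y0 hy0) (hMle y0 hy0)
  rw [abs_le]
  constructor <;> nlinarith [h1.1, h1.2, h2.1, h2.2]
end

section
/- Let μ be a probability measure on a finite set Y and μ_n the empirical measure of n i.i.d. samples from μ. Then for any p > 0 and any positive integer k, P( sup_y |μ_n(y) - μ(y)| > p ) ≤ (1/(p^{2k} n^k)) · (log(e^{2k-1}|Y|))^k. In particular, taking k = 1, P( sup_y |μ_n(y) - μ(y)| > p ) ≤ log(e|Y|)/(p² n). -/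
open MeasureTheory Real

set_option maxHeartbeats 2000000

section EmpiricalAux
open Set


lemma bern_mgf_aux {q : ℝ} (hq0 : 0 ≤ q) (hq1 : q ≤ 1) {t : ℝ} (ht : 0 ≤ t) :
    -(t*q) + Real.log (1 - q + q * Real.exp t) ≤ t^2/8 := by
  have hW : ∀ s : ℝ, 0 < 1 - q + q * Real.exp s := by
    intro s
    rcases eq_or_lt_of_le hq0 with h|h
    · simp [← h]
    · have := Real.exp_pos s
      nlinarith
  set W : ℝ → ℝ := fun s => 1 - q + q * Real.exp s with hWdef
  set ψ : ℝ → ℝ := fun s => q * Real.exp s / W s with hψdef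
  have hWd : ∀ s, HasDerivAt W (q * Real.exp s) s := by
    intro s
    exact ((Real.hasDerivAt_exp s).const_mul q).const_add (1 - q)
  have hψd : ∀ s, HasDerivAt ψ (ψ s * (1 - ψ s)) s := by
    intro s
    have h := ((Real.hasDerivAt_exp s).const_mul q).div (hWd s) (ne_of_gt (hW s))
    refine h.congr_deriv ?_
    have hWs := hW s
    simp only [hψdef, hWdef]
    field_simp
  have hψle : ∀ s, 0 ≤ s → ψ s - q ≤ s / 4 := by
    intro s hs
    set D : ℝ → ℝ := fun u => u/4 - ψ u + q with hDdef
    have hDd : ∀ u, HasDerivAt D (1/4 - ψ u * (1 - ψ u)) u := by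
      intro u
      exact ((hasDerivAt_id u).div_const 4).sub (hψd u) |>.add_const q
    have hmono : MonotoneOn D (Ici (0:ℝ)) := by
      apply monotoneOn_of_deriv_nonneg (convex_Ici 0)
      · exact fun u _ => ((hDd u).differentiableAt.continuousAt).continuousWithinAt
      · exact fun u _ => ((hDd u).differentiableAt).differentiableWithinAt
      · intro u _
        rw [(hDd u).deriv]
        nlinarith [sq_nonneg (ψ u - 1/2)]
    have h0 : D 0 = 0 := by
      simp [hDdef, hψdef, hWdef]
    have := hmono (self_mem_Ici) (mem_Ici.mpr hs) hs
    rw [h0] at this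
    simp only [hDdef] at this
    linarith
  -- second layer
  set φ : ℝ → ℝ := fun s => -(s*q) + Real.log (W s) with hφdef
  set E : ℝ → ℝ := fun s => s^2/8 - φ s with hEdef
  have hφd : ∀ s, HasDerivAt φ (-q + ψ s) s := by
    intro s
    have hlog : HasDerivAt (fun u => Real.log (W u)) (q * Real.exp s / W s) s :=
      (hWd s).log (ne_of_gt (hW s))
    have hlin : HasDerivAt (fun u : ℝ => -(u*q)) (-q) s := by
      simpa [mul_comm] using (hasDerivAt_id s).const_mul (-q)
    exact hlin.add hlog
  have hEd : ∀ s, HasDerivAt E (s/4 - (ψ s - q)) s := by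
    intro s
    have h1 : HasDerivAt (fun u : ℝ => u^2/8) (s/4) s := by
      have h := (hasDerivAt_pow 2 s).div_const 8
      refine h.congr_deriv ?_
      ring
    have h2 := h1.sub (hφd s)
    refine h2.congr_deriv ?_
    ring
  have hmono : MonotoneOn E (Ici (0:ℝ)) := by
    apply monotoneOn_of_deriv_nonneg (convex_Ici 0)
    · exact fun u _ => ((hEd u).differentiableAt.continuousAt).continuousWithinAt
    · exact fun u _ => ((hEd u).differentiableAt).differentiableWithinAt
    · intro u hu
      rw [interior_Ici] at hu
      rw [(hEd u).deriv]
      have := hψle u (le_of_lt hu)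
      linarith
  have h0 : E 0 = 0 := by
    simp [hEdef, hφdef, hWdef]
  have := hmono (self_mem_Ici) (mem_Ici.mpr ht) ht
  rw [h0] at this
  simp only [hEdef] at this
  linarith

lemma bern_mgf_le {q : ℝ} (hq0 : 0 ≤ q) (hq1 : q ≤ 1) (t : ℝ) :
    q * Real.exp (t*(1-q)) + (1-q) * Real.exp (-(t*q)) ≤ Real.exp (t^2/8) := by
  have key : ∀ q t : ℝ, 0 ≤ q → q ≤ 1 → 0 ≤ t →
      q * Real.exp (t*(1-q)) + (1-q) * Real.exp (-(t*q)) ≤ Real.exp (t^2/8) := by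
    intro q t hq0 hq1 ht
    have hW : 0 < 1 - q + q * Real.exp t := by
      rcases eq_or_lt_of_le hq0 with h|h
      · simp [← h]
      · have := Real.exp_pos t; nlinarith
    have h := bern_mgf_aux hq0 hq1 ht
    have heq : q * Real.exp (t*(1-q)) + (1-q) * Real.exp (-(t*q))
        = Real.exp (-(t*q) + Real.log (1 - q + q * Real.exp t)) := by
      rw [Real.exp_add, Real.exp_log hW]
      rw [show t*(1-q) = -(t*q) + t by ring, Real.exp_add]
      ring
    rw [heq]
    exact Real.exp_le_exp.mpr h
  rcases le_total 0 t with ht|ht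
  · exact key q t hq0 hq1 ht
  · have h := key (1-q) (-t) (by linarith) (by linarith) (by linarith)
    have e1 : (-t)*(1-(1-q)) = -(t*q) := by ring
    have e2 : -((-t)*(1-q)) = t*(1-q) := by ring
    rw [e1, e2] at h
    have e3 : (-t)^2/8 = t^2/8 := by ring
    rw [e3] at h
    linarith


lemma exp_le_succ_div {n : ℕ} (hn : 1 ≤ n) :
    Real.exp 1 ≤ ((n:ℝ)+1)^(n+1) / (n:ℝ)^(n+1) := by
  have hn0 : (0:ℝ) < n := by exact_mod_cast hn
  have h1 : (n:ℝ)/((n:ℝ)+1) ≤ Real.exp (-(1/((n:ℝ)+1))) := by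
    have h := Real.add_one_le_exp (-(1/((n:ℝ)+1)))
    have : -(1/((n:ℝ)+1)) + 1 = (n:ℝ)/((n:ℝ)+1) := by field_simp; ring
    linarith [this ▸ h]
  have h3 : Real.exp (1/((n:ℝ)+1)) ≤ ((n:ℝ)+1)/(n:ℝ) := by
    have hmul : Real.exp (1/((n:ℝ)+1)) * ((n:ℝ)/((n:ℝ)+1))
        ≤ Real.exp (1/((n:ℝ)+1)) * Real.exp (-(1/((n:ℝ)+1))) :=
      mul_le_mul_of_nonneg_left h1 (Real.exp_pos _).le
    rw [← Real.exp_add] at hmul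
    simp only [add_neg_cancel, Real.exp_zero] at hmul
    rw [le_div_iff₀ hn0]
    have h4 : Real.exp (1/((n:ℝ)+1)) * ((n:ℝ)/((n:ℝ)+1)) * ((n:ℝ)+1)
        = Real.exp (1/((n:ℝ)+1)) * (n:ℝ) := by field_simp
    nlinarith [Real.exp_pos (1/((n:ℝ)+1))]
  calc Real.exp 1 = Real.exp (1/((n:ℝ)+1))^(n+1) := by
        rw [← Real.exp_nat_mul]
        congr 1
        field_simp
        push_cast
        ring
    _ ≤ (((n:ℝ)+1)/(n:ℝ))^(n+1) := pow_le_pow_left₀ (Real.exp_pos _).le h3 _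
    _ = ((n:ℝ)+1)^(n+1) / (n:ℝ)^(n+1) := div_pow _ _ _

lemma factorial_le_stirling : ∀ n : ℕ, 1 ≤ n →
    (n.factorial : ℝ) ≤ Real.exp 1 * n * ((n:ℝ)/Real.exp 1)^n := by
  intro n hn
  induction n with
  | zero => omega
  | succ m ih =>
    by_cases hm : m = 0
    · subst hm
      have he := Real.exp_pos 1
      have h : Real.exp 1 * (1 / Real.exp 1) = 1 := by
        rw [mul_one_div, div_self he.ne']
      norm_num [Nat.factorial, h]
    · have hm1 : 1 ≤ m := Nat.one_le_iff_ne_zero.mpr hm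
      have ihm := ih hm1
      have he := Real.exp_pos 1
      have hm0 : (0:ℝ) < m := by exact_mod_cast hm1
      have hexp := exp_le_succ_div hm1
      have h2 : Real.exp 1 * (m:ℝ)^(m+1) ≤ ((m:ℝ)+1)^(m+1) :=
        (le_div_iff₀ (pow_pos hm0 _)).mp hexp
      have key : (m:ℝ) * ((m:ℝ)/Real.exp 1)^m ≤ (((m:ℝ)+1)/Real.exp 1)^(m+1) := by
        rw [div_pow, div_pow, le_div_iff₀ (by positivity)]
        have hpne : Real.exp 1 ^ m ≠ 0 := pow_ne_zero _ he.ne'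
        have expand : (m:ℝ) * ((m:ℝ)^m/Real.exp 1^m) * Real.exp 1^(m+1)
            = Real.exp 1 * (m:ℝ)^(m+1) := by
          rw [pow_succ (Real.exp 1) m]
          have : (m:ℝ) * ((m:ℝ)^m/Real.exp 1^m) * (Real.exp 1^m * Real.exp 1)
              = (m:ℝ) * (m:ℝ)^m * Real.exp 1 * (Real.exp 1^m / Real.exp 1^m) := by ring
          rw [this, div_self hpne, mul_one, pow_succ]
          ring
        rw [expand]
        exact h2
      calc ((m+1).factorial : ℝ) = ((m:ℝ)+1) * (m.factorial:ℝ) := by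
            rw [Nat.factorial_succ]; push_cast; ring
        _ ≤ ((m:ℝ)+1) * (Real.exp 1 * m * ((m:ℝ)/Real.exp 1)^m) := by
            apply mul_le_mul_of_nonneg_left ihm (by positivity)
        _ = Real.exp 1 * (((m:ℝ)) * ((m:ℝ)/Real.exp 1)^m) * ((m:ℝ)+1) := by ring
        _ ≤ Real.exp 1 * ((((m:ℝ)+1)/Real.exp 1)^(m+1)) * ((m:ℝ)+1) := by
            apply mul_le_mul_of_nonneg_right _ (by positivity)
            exact mul_le_mul_of_nonneg_left key (by positivity)
        _ = Real.exp 1 * ((m+1:ℕ):ℝ) * (((m+1:ℕ):ℝ)/Real.exp 1)^(m+1) := by push_cast; ring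

lemma pow_div_factorial_le_exp {x : ℝ} (hx : 0 ≤ x) (m : ℕ) :
    x^m / m.factorial ≤ Real.exp x := by
  refine le_trans ?_ (Real.sum_le_exp_of_nonneg hx (m+1))
  exact Finset.single_le_sum (f := fun i => x^i/(i.factorial:ℝ))
    (fun i _ => by positivity) (Finset.self_mem_range_succ m)

lemma four_mul_le_two_pow {J : ℕ} (hJ : 4 ≤ J) : (4*J : ℝ) ≤ 2^J := by
  induction J with
  | zero => omega
  | succ m ih =>
    by_cases hm : 4 ≤ m
    · have := ih hm
      have h2 : (0:ℝ) < 2^m := by positivity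
      push_cast
      rw [pow_succ]
      push_cast at this
      have hm1 : (1:ℝ) ≤ m := by
        have : (4:ℝ) ≤ m := by exact_mod_cast hm
        linarith
      nlinarith
    · have : m = 3 := by omega
      subst this
      norm_num

lemma endgame {k N J : ℕ} (hk : 2 ≤ k) (hN : 1 ≤ N) (hJdef : J = k + ⌈Real.log N⌉₊) :
    2*(N:ℝ)*((2*J).factorial) * (Real.exp 1/(8*(J:ℝ)))^J
      ≤ (2*(k:ℝ) - 1 + Real.log N)^J := by
  set x := Real.log N with hxdef
  set c := ⌈x⌉₊ with hcdef
  set E := Real.exp 1 with hEdef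
  have hx0 : 0 ≤ x := Real.log_nonneg (by exact_mod_cast hN)
  have hNx : (N:ℝ) = Real.exp x := by
    rw [hxdef, Real.exp_log]
    exact_mod_cast Nat.pos_of_ne_zero (by omega)
  have hxc : x ≤ c := Nat.le_ceil x
  have hJ1 : 1 ≤ J := by omega
  have hJr0 : (0:ℝ) < J := by exact_mod_cast hJ1
  have he : 0 < E := Real.exp_pos 1
  have hJkc : (J:ℝ) = (k:ℝ) + (c:ℝ) := by rw [hJdef]; push_cast; ring
  have hk2 : (2:ℝ) ≤ k := by exact_mod_cast hk
  have hJup : (J:ℝ) ≤ 2*(k:ℝ) - 1 + x := by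
    have hcx : (c:ℝ) < x + 1 := Nat.ceil_lt_add_one hx0
    linarith
  have hbase0 : (3:ℝ) ≤ 2*(k:ℝ) - 1 + x := by linarith
  rcases le_or_gt 4 J with hJ4 | hJ4
  · -- generic case
    have hxJ : x ≤ (J:ℝ) - 1 := by linarith
    have hNe : (N:ℝ) ≤ Real.exp ((J:ℝ)-1) := by
      rw [hNx]; exact Real.exp_le_exp.mpr hxJ
    have hstir := factorial_le_stirling (2*J) (by omega)
    rw [← hEdef] at hstir
    have h2Jr : ((2*J:ℕ):ℝ) = 2*(J:ℝ) := by push_cast; ring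
    have hexpJ : Real.exp ((J:ℝ)-1) * E = E ^ J := by
      rw [hEdef, ← Real.exp_add]
      have h : (J:ℝ) - 1 + 1 = (J:ℝ)*1 := by ring
      rw [h, Real.exp_nat_mul]
    have hbase : E * ((2*(J:ℝ)/E)^2 * (E/(8*(J:ℝ)))) = (J:ℝ)/2 := by
      field_simp
      ring
    have key : 2*Real.exp ((J:ℝ)-1) * (E * ((2*J:ℕ):ℝ) * (((2*J:ℕ):ℝ)/E)^(2*J)) *
        (E/(8*(J:ℝ)))^J = 4*(J:ℝ)*(((J:ℝ)/2)^J) := by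
      rw [h2Jr, pow_mul]
      rw [show 2*Real.exp ((J:ℝ)-1) * (E * (2*(J:ℝ)) * ((2*(J:ℝ)/E)^2)^J) * (E/(8*(J:ℝ)))^J
          = 4*(J:ℝ)*(Real.exp ((J:ℝ)-1)*E) * (((2*(J:ℝ)/E)^2)^J * (E/(8*(J:ℝ)))^J) from by ring]
      rw [hexpJ, ← mul_pow, mul_assoc (4*(J:ℝ)) (E^J), ← mul_pow, hbase]
    have step1 : 2*(N:ℝ)*((2*J).factorial) * (E/(8*(J:ℝ)))^J
        ≤ 2*Real.exp ((J:ℝ)-1) * (E * ((2*J:ℕ):ℝ) * (((2*J:ℕ):ℝ)/E)^(2*J)) *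
          (E/(8*(J:ℝ)))^J := by
      have hp : (0:ℝ) ≤ (E/(8*(J:ℝ)))^J := by positivity
      apply mul_le_mul_of_nonneg_right _ hp
      calc 2*(N:ℝ)*((2*J).factorial)
          ≤ 2*(N:ℝ)*(E * ((2*J:ℕ):ℝ) * (((2*J:ℕ):ℝ)/E)^(2*J)) := by
            apply mul_le_mul_of_nonneg_left hstir (by positivity)
        _ ≤ 2*Real.exp ((J:ℝ)-1)*(E * ((2*J:ℕ):ℝ) * (((2*J:ℕ):ℝ)/E)^(2*J)) := by
            apply mul_le_mul_of_nonneg_right _ (by positivity)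
            linarith
    have step2 : 4*(J:ℝ)*(((J:ℝ)/2)^J) ≤ (J:ℝ)^J := by
      rw [div_pow]
      have h4 := four_mul_le_two_pow hJ4
      have h2J : (0:ℝ) < 2^J := by positivity
      calc 4*(J:ℝ)*((J:ℝ)^J/2^J) = (4*(J:ℝ)/2^J)*(J:ℝ)^J := by ring
        _ ≤ 1*(J:ℝ)^J := by
            apply mul_le_mul_of_nonneg_right _ (by positivity)
            rw [div_le_one h2J]
            exact h4
        _ = (J:ℝ)^J := one_mul _
    have step3 : (J:ℝ)^J ≤ (2*(k:ℝ) - 1 + x)^J :=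
      pow_le_pow_left₀ (le_of_lt hJr0) hJup J
    calc 2*(N:ℝ)*((2*J).factorial) * (E/(8*(J:ℝ)))^J
        ≤ 2*Real.exp ((J:ℝ)-1) * (E * ((2*J:ℕ):ℝ) * (((2*J:ℕ):ℝ)/E)^(2*J)) *
          (E/(8*(J:ℝ)))^J := step1
      _ = 4*(J:ℝ)*(((J:ℝ)/2)^J) := key
      _ ≤ (J:ℝ)^J := step2
      _ ≤ (2*(k:ℝ) - 1 + x)^J := step3
  · -- small cases J ∈ {2,3}
    have hc1 : c ≤ 1 := by omega
    have hx1 : x ≤ 1 := by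
      have hcr : (c:ℝ) ≤ 1 := by exact_mod_cast hc1
      linarith
    have hNe : (N:ℝ) ≤ E := by
      rw [hNx, hEdef]; exact Real.exp_le_exp.mpr hx1
    have heb : E ≤ 2.7182818286 := (Real.exp_one_lt_d9).le
    have he2 : E^2 ≤ 7.39 := by nlinarith [he]
    have he3 : E^3 ≤ 20.1 := by nlinarith [he, he2]
    have he4 : E^4 ≤ 54.7 := by nlinarith [he, he2]
    have hNE2 : (N:ℝ)*E^2 ≤ E^3 := by
      have h := mul_le_mul_of_nonneg_right hNe (by positivity : (0:ℝ) ≤ E^2)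
      calc (N:ℝ)*E^2 ≤ E*E^2 := h
        _ = E^3 := by ring
    have hNE3 : (N:ℝ)*E^3 ≤ E^4 := by
      have h := mul_le_mul_of_nonneg_right hNe (by positivity : (0:ℝ) ≤ E^3)
      calc (N:ℝ)*E^3 ≤ E*E^3 := h
        _ = E^4 := by ring
    have hJ23 : J = 2 ∨ J = 3 := by omega
    rcases hJ23 with hJ | hJ
    · rw [hJ]
      have hR : (9:ℝ) ≤ (2*(k:ℝ) - 1 + x)^2 := by
        have h := pow_le_pow_left₀ (by norm_num : (0:ℝ) ≤ 3) hbase0 2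
        norm_num at h
        linarith
      have hfac : (((2*2).factorial : ℕ):ℝ) = 24 := by norm_num [Nat.factorial]
      rw [hfac]
      have hcast : ((2:ℕ):ℝ) = 2 := by norm_num
      rw [hcast, div_pow]
      have h16 : (8*(2:ℝ))^2 = 256 := by norm_num
      rw [h16]
      calc 2*(N:ℝ)*24*(E^2/256) = (3/16)*((N:ℝ)*E^2) := by ring
        _ ≤ (3/16)*E^3 := by linarith [hNE2]
        _ ≤ 9 := by linarith [he3]
        _ ≤ (2*(k:ℝ) - 1 + x)^2 := hR
    · rw [hJ]
      have hR : (27:ℝ) ≤ (2*(k:ℝ) - 1 + x)^3 := by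
        have h := pow_le_pow_left₀ (by norm_num : (0:ℝ) ≤ 3) hbase0 3
        norm_num at h
        linarith
      have hfac : (((2*3).factorial : ℕ):ℝ) = 720 := by norm_num [Nat.factorial]
      rw [hfac]
      have hcast : ((3:ℕ):ℝ) = 3 := by norm_num
      rw [hcast, div_pow]
      have h24 : (8*(3:ℝ))^3 = 13824 := by norm_num
      rw [h24]
      calc 2*(N:ℝ)*720*(E^3/13824) = (5/48)*((N:ℝ)*E^3) := by ring
        _ ≤ (5/48)*E^4 := by linarith [hNE3]
        _ ≤ 27 := by linarith [he4]
        _ ≤ (2*(k:ℝ) - 1 + x)^3 := hR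

end EmpiricalAux

/-- Concentration of the empirical measure of `n` i.i.d. samples from `μ` on a
finite set: `P(sup_y |μₙ(y) - μ(y)| > p) ≤ (log(e^{2k-1}|Y|))^k / (p^{2k} n^k)`. -/
theorem empirical_measure_sup_dev {Ω Y : Type*} [MeasurableSpace Ω]
    [Fintype Y] [Nonempty Y] [DecidableEq Y] [MeasurableSpace Y] [MeasurableSingletonClass Y]
    (P : Measure Ω) [IsProbabilityMeasure P]
    (μ : Measure Y) [IsProbabilityMeasure μ]
    {n : ℕ} (hn : 1 ≤ n) (X : Fin n → Ω → Y)
    (hmeas : ∀ i, Measurable (X i))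
    (hindep : ProbabilityTheory.iIndepFun X P)
    (hlaw : ∀ i, Measure.map (X i) P = μ)
    (p : ℝ) (hp : 0 < p) (k : ℕ) (hk : 1 ≤ k) :
    (P {ω | p < ⨆ y : Y,
        |(∑ i, if X i ω = y then (1 : ℝ) else 0) / n - (μ {y}).toReal|}).toReal ≤
      1 / (p ^ (2 * k) * (n : ℝ) ^ k) *
        (Real.log (Real.exp (2 * (k : ℝ) - 1) * Fintype.card Y)) ^ k := by
  classical
  have hn0 : (0:ℝ) < n := by exact_mod_cast hn
  have hnne : (n:ℝ) ≠ 0 := hn0.ne'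
  set N := Fintype.card Y with hNdef
  have hN1 : 1 ≤ N := Fintype.card_pos
  have hNr : (1:ℝ) ≤ N := by exact_mod_cast hN1
  -- the log term
  set L : ℝ := 2*(k:ℝ) - 1 + Real.log N with hLdef
  have hkr : (1:ℝ) ≤ k := by exact_mod_cast hk
  have hlogN : 0 ≤ Real.log N := Real.log_nonneg hNr
  have hL1 : 1 ≤ L := by rw [hLdef]; linarith
  have hL0 : 0 < L := lt_of_lt_of_le one_pos hL1
  have hRHSlog : Real.log (Real.exp (2 * (k : ℝ) - 1) * N) = L := by
    rw [Real.log_mul (Real.exp_ne_zero _) (by positivity), Real.log_exp, hLdef]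
  -- RHS equals (L/(n p^2))^k
  have hRHSeq : 1 / (p ^ (2 * k) * (n : ℝ) ^ k) * L ^ k = (L/((n:ℝ)*p^2))^k := by
    rw [div_pow, mul_pow, pow_mul]
    have h1 : (p^2)^k ≠ 0 := by positivity
    have h2 : (n:ℝ)^k ≠ 0 := by positivity
    field_simp
  rw [hRHSlog, hRHSeq]
  set q : Y → ℝ := fun y => (μ {y}).toReal with hqdef
  have hq0 : ∀ y, 0 ≤ q y := fun y => ENNReal.toReal_nonneg
  have hq1 : ∀ y, q y ≤ 1 := by
    intro y
    have h : μ {y} ≤ μ Set.univ := measure_mono (Set.subset_univ {y})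
    have h2 := ENNReal.toReal_mono (measure_ne_top μ Set.univ) h
    rwa [measure_univ, ENNReal.toReal_one] at h2
  set g : Y → Y → ℝ := fun y y' => (if y' = y then (1:ℝ) else 0) - q y with hgdef
  have hgb : ∀ y y', |g y y'| ≤ 1 := by
    intro y y'
    rw [abs_le]
    simp only [hgdef]
    split_ifs <;> constructor <;> linarith [hq0 y, hq1 y]
  set S : Y → Ω → ℝ := fun y ω => ∑ i, g y (X i ω) with hSdef
  have hSmeas : ∀ y, Measurable (S y) := fun y =>
    Finset.measurable_sum _ (fun i _ => (measurable_of_finite (g y)).comp (hmeas i))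
  have hSb : ∀ y ω, |S y ω| ≤ n := by
    intro y ω
    calc |S y ω| ≤ ∑ i, |g y (X i ω)| := Finset.abs_sum_le_sum_abs _ _
      _ ≤ ∑ _i : Fin n, (1:ℝ) := Finset.sum_le_sum (fun i _ => hgb y (X i ω))
      _ = n := by simp
  -- integrability helper
  have hInt : ∀ (f : Ω → ℝ) (C : ℝ), Measurable f → (∀ ω, |f ω| ≤ C) → Integrable f P := by
    intro f C hf hb
    exact Integrable.mono' (integrable_const C) hf.aestronglyMeasurable
      (Filter.Eventually.of_forall (fun ω => by simpa [Real.norm_eq_abs] using hb ω))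
  -- expectation transfer
  have hEmap : ∀ (i : Fin n) (f : Y → ℝ), ∫ ω, f (X i ω) ∂P = ∑ y', (μ {y'}).toReal * f y' := by
    intro i f
    have h1 : ∫ y', f y' ∂(Measure.map (X i) P) = ∫ ω, f (X i ω) ∂P :=
      integral_map (hmeas i).aemeasurable (measurable_of_finite f).aestronglyMeasurable
    rw [← h1, hlaw i, integral_fintype (f := f) Integrable.of_finite]
    simp [smul_eq_mul]
    rfl
  have i0 : Fin n := ⟨0, by omega⟩
  have hsum1 : ∑ y', (μ {y'}).toReal = 1 := by
    have h := hEmap i0 (fun _ => (1:ℝ))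
    simpa using h.symm
  -- sum over complement
  have hsumc : ∀ y, ∑ y' ∈ Finset.univ \ {y}, (μ {y'}).toReal = 1 - q y := by
    intro y
    have h := Finset.sum_eq_add_sum_sdiff_singleton_of_mem (Finset.mem_univ y)
      (fun y' => (μ {y'}).toReal)
    rw [hsum1] at h
    have : q y = (μ {y}).toReal := rfl
    linarith [h]
  -- computation of μ-integrals of functions of g
  have hgint : ∀ (y : Y) (f : ℝ → ℝ) (i : Fin n),
      ∫ ω, f (g y (X i ω)) ∂P = q y * f (1 - q y) + (1 - q y) * f (0 - q y) := by
    intro y f i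
    rw [hEmap i (fun y' => f (g y y'))]
    rw [Finset.sum_eq_add_sum_sdiff_singleton_of_mem (Finset.mem_univ y)]
    have h1 : g y y = 1 - q y := by simp [hgdef]
    have h2 : ∀ y' ∈ Finset.univ \ {y}, (μ {y'}).toReal * f (g y y')
        = (μ {y'}).toReal * f (0 - q y) := by
      intro y' hy'
      have hne : y' ≠ y := by
        rw [Finset.mem_sdiff, Finset.mem_singleton] at hy'
        exact hy'.2
      simp [hgdef, hne]
    rw [h1, Finset.sum_congr rfl h2, ← Finset.sum_mul, hsumc y]
  -- per-variable mgf bound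
  have hmgf1 : ∀ (y : Y) (i : Fin n) (t : ℝ),
      ProbabilityTheory.mgf ((g y) ∘ (X i)) P t ≤ Real.exp (t^2/8) := by
    intro y i t
    have h : ProbabilityTheory.mgf ((g y) ∘ (X i)) P t
        = ∫ ω, Real.exp (t * g y (X i ω)) ∂P := rfl
    rw [h, hgint y (fun u => Real.exp (t * u)) i]
    have he : t * (0 - q y) = -(t * q y) := by ring
    rw [he]
    exact bern_mgf_le (hq0 y) (hq1 y) t
  -- mgf of sum
  have hmgfS : ∀ (y : Y) (t : ℝ),
      ProbabilityTheory.mgf (S y) P t ≤ Real.exp ((n:ℝ) * (t^2/8)) := by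
    intro y t
    have hξindep : ProbabilityTheory.iIndepFun
        (fun i => (g y) ∘ (X i)) P := hindep.comp _ (fun _ => measurable_of_finite (g y))
    have hξmeas : ∀ i : Fin n, Measurable ((g y) ∘ (X i)) :=
      fun i => (measurable_of_finite (g y)).comp (hmeas i)
    have hsum := hξindep.mgf_sum hξmeas Finset.univ (t := t)
    have hfun : S y = ∑ i : Fin n, (g y) ∘ (X i) := by
      ext ω
      rw [hSdef]
      simp [Finset.sum_apply]
    rw [hfun, hsum]
    calc ∏ i : Fin n, ProbabilityTheory.mgf ((g y) ∘ (X i)) P t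
        ≤ ∏ _i : Fin n, Real.exp (t^2/8) :=
          Finset.prod_le_prod (fun i _ => ProbabilityTheory.mgf_nonneg)
            (fun i _ => hmgf1 y i t)
      _ = Real.exp (t^2/8) ^ n := by
          rw [Finset.prod_const, Finset.card_univ, Fintype.card_fin]
      _ = Real.exp ((n:ℝ) * (t^2/8)) := (Real.exp_nat_mul _ n).symm
  -- moment bound
  have hmoment : ∀ (y : Y) (J : ℕ), 1 ≤ J →
      ∫ ω, (S y ω)^(2*J) ∂P
        ≤ 2*((2*J).factorial:ℝ) * Real.exp J * ((n:ℝ)/(8*J))^J := by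
    intro y J hJ
    have hJ0 : (0:ℝ) < J := by exact_mod_cast hJ
    set lam := Real.sqrt (8*J/(n:ℝ)) with hlamdef
    have hlam0 : 0 < lam := Real.sqrt_pos.mpr (by positivity)
    have hlamsq : lam^2 = 8*J/(n:ℝ) := Real.sq_sqrt (by positivity)
    have hfacpos : (0:ℝ) < ((2*J).factorial:ℝ) := by exact_mod_cast (2*J).factorial_pos
    have hpw : ∀ ω, (S y ω)^(2*J) * (8*J/(n:ℝ))^J
        ≤ ((2*J).factorial:ℝ) * (Real.exp (lam * S y ω) + Real.exp (-(lam * S y ω))) := by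
      intro ω
      have h1 : |lam * S y ω|^(2*J) / ((2*J).factorial:ℝ) ≤ Real.exp |lam * S y ω| :=
        pow_div_factorial_le_exp (abs_nonneg _) (2*J)
      have h2 : Real.exp |lam * S y ω|
          ≤ Real.exp (lam * S y ω) + Real.exp (-(lam * S y ω)) := by
        rcases abs_cases (lam * S y ω) with ⟨h,_⟩|⟨h,_⟩ <;> rw [h] <;>
          [linarith [Real.exp_pos (-(lam * S y ω))]; linarith [Real.exp_pos (lam * S y ω)]]
      have h3 : |lam * S y ω|^(2*J) = (8*J/(n:ℝ))^J * (S y ω)^(2*J) := by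
        rw [abs_mul, mul_pow, pow_mul, pow_mul, sq_abs, sq_abs, hlamsq, ← pow_mul]
      have h4 : |lam * S y ω|^(2*J) ≤ ((2*J).factorial:ℝ) * Real.exp |lam * S y ω| := by
        rw [div_le_iff₀ hfacpos] at h1
        linarith [h1]
      calc (S y ω)^(2*J) * (8*J/(n:ℝ))^J = |lam * S y ω|^(2*J) := by rw [h3]; ring
        _ ≤ ((2*J).factorial:ℝ) * Real.exp |lam * S y ω| := h4
        _ ≤ ((2*J).factorial:ℝ) * (Real.exp (lam * S y ω) + Real.exp (-(lam * S y ω))) :=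
            mul_le_mul_of_nonneg_left h2 (le_of_lt hfacpos)
    have hintS : Integrable (fun ω => (S y ω)^(2*J)) P := by
      apply hInt _ ((n:ℝ)^(2*J)) ((hSmeas y).pow_const _)
      intro ω
      rw [abs_pow]
      exact pow_le_pow_left₀ (abs_nonneg _) (hSb y ω) _
    have hintE1 : Integrable (fun ω => Real.exp (lam * S y ω)) P := by
      apply hInt _ (Real.exp (lam * n)) (((hSmeas y).const_mul lam).exp)
      intro ω
      rw [abs_of_pos (Real.exp_pos _)]
      apply Real.exp_le_exp.mpr
      have := (abs_le.mp (hSb y ω)).2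
      exact mul_le_mul_of_nonneg_left this (le_of_lt hlam0)
    have hintE2 : Integrable (fun ω => Real.exp (-(lam * S y ω))) P := by
      apply hInt _ (Real.exp (lam * n)) (((hSmeas y).const_mul lam).neg.exp)
      intro ω
      rw [abs_of_pos (Real.exp_pos _)]
      apply Real.exp_le_exp.mpr
      have := (abs_le.mp (hSb y ω)).1
      show -(lam * S y ω) ≤ lam * n
      nlinarith [hlam0]
    have hmono := integral_mono (μ := P)
      (hintS.mul_const ((8*J/(n:ℝ))^J))
      ((hintE1.add hintE2).const_mul ((2*J).factorial:ℝ)) hpw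
    rw [integral_mul_const, integral_const_mul] at hmono
    simp only [Pi.add_apply] at hmono
    rw [integral_add hintE1 hintE2] at hmono
    have hm1 : ∫ ω, Real.exp (lam * S y ω) ∂P ≤ Real.exp ((n:ℝ) * (lam^2/8)) := hmgfS y lam
    have hm2 : ∫ ω, Real.exp (-(lam * S y ω)) ∂P ≤ Real.exp ((n:ℝ) * ((-lam)^2/8)) := by
      have h := hmgfS y (-lam)
      have : ∀ ω, -(lam * S y ω) = (-lam) * S y ω := fun ω => by ring
      simp only [this]
      exact h
    have hexpJ : (n:ℝ) * (lam^2/8) = J := by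
      rw [hlamsq]
      field_simp
    rw [hexpJ] at hm1
    have hexpJ2 : (n:ℝ) * ((-lam)^2/8) = J := by
      rw [(show (-lam)^2 = lam^2 from by ring), hlamsq]
      field_simp
    rw [hexpJ2] at hm2
    have hc : (0:ℝ) < (8*J/(n:ℝ))^J := by positivity
    rw [← le_div_iff₀ hc] at hmono
    calc ∫ ω, (S y ω)^(2*J) ∂P
        ≤ ((2*J).factorial:ℝ) * ((∫ ω, Real.exp (lam * S y ω) ∂P)
            + ∫ ω, Real.exp (-(lam * S y ω)) ∂P) / (8*J/(n:ℝ))^J := hmono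
      _ ≤ ((2*J).factorial:ℝ) * (Real.exp J + Real.exp J) / (8*J/(n:ℝ))^J := by
          gcongr
      _ = 2*((2*J).factorial:ℝ) * Real.exp J * ((n:ℝ)/(8*J))^J := by
          rw [(show ((n:ℝ)/(8*J)) = (8*J/(n:ℝ))⁻¹ from by rw [inv_div]), inv_pow]
          field_simp
          ring
  -- events and Markov
  set A : Y → Set Ω := fun y =>
    {ω | p < |(∑ i, if X i ω = y then (1:ℝ) else 0) / n - q y|} with hAdef
  have hSrw : ∀ y ω, S y ω
      = n * ((∑ i, if X i ω = y then (1:ℝ) else 0) / n - q y) := by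
    intro y ω
    have h1 : S y ω = (∑ i, if X i ω = y then (1:ℝ) else 0) - n * q y := by
      rw [hSdef]
      simp only [hgdef]
      rw [Finset.sum_sub_distrib, Finset.sum_const, Finset.card_univ, Fintype.card_fin]
      simp [nsmul_eq_mul]
    rw [h1, mul_sub, mul_div_cancel₀ _ hnne]
  have hMarkov : ∀ (y : Y) (J : ℕ), 1 ≤ J →
      (P (A y)).toReal ≤ (∫ ω, (S y ω)^(2*J) ∂P) / ((n:ℝ)*p)^(2*J) := by
    intro y J hJ
    have hnp : (0:ℝ) < (n:ℝ)*p := mul_pos hn0 hp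
    have hev : A y ⊆ {ω | ((n:ℝ)*p)^(2*J) ≤ (S y ω)^(2*J)} := by
      intro ω hω
      simp only [hAdef, Set.mem_setOf_eq] at hω ⊢
      have h1 : (n:ℝ)*p < |S y ω| := by
        rw [hSrw y ω, abs_mul, abs_of_pos hn0]
        exact (mul_lt_mul_iff_right₀ hn0).mpr hω
      calc ((n:ℝ)*p)^(2*J) ≤ |S y ω|^(2*J) := pow_le_pow_left₀ (le_of_lt hnp) h1.le _
        _ = (S y ω)^(2*J) := by rw [pow_mul, pow_mul, sq_abs]
    have hfint : Integrable (fun ω => (S y ω)^(2*J)) P := by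
      apply hInt _ ((n:ℝ)^(2*J)) ((hSmeas y).pow_const _)
      intro ω
      rw [abs_pow]
      exact pow_le_pow_left₀ (abs_nonneg _) (hSb y ω) _
    have hmark := mul_meas_ge_le_integral_of_nonneg (μ := P)
      (f := fun ω => (S y ω)^(2*J))
      (Filter.Eventually.of_forall (fun ω => by
        show (0:ℝ) ≤ (S y ω)^(2*J)
        rw [pow_mul]
        positivity)) hfint (((n:ℝ)*p)^(2*J))
    have hP1 : (P (A y)).toReal
        ≤ (P {ω | ((n:ℝ)*p)^(2*J) ≤ (S y ω)^(2*J)}).toReal :=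
      ENNReal.toReal_mono (measure_ne_top P _) (measure_mono hev)
    have hε : (0:ℝ) < ((n:ℝ)*p)^(2*J) := by positivity
    rw [le_div_iff₀ hε]
    calc (P (A y)).toReal * ((n:ℝ)*p)^(2*J)
        ≤ (P {ω | ((n:ℝ)*p)^(2*J) ≤ (S y ω)^(2*J)}).toReal * ((n:ℝ)*p)^(2*J) :=
          mul_le_mul_of_nonneg_right hP1 (le_of_lt hε)
      _ = ((n:ℝ)*p)^(2*J) * (P {ω | ((n:ℝ)*p)^(2*J) ≤ (S y ω)^(2*J)}).toReal := mul_comm _ _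
      _ ≤ ∫ ω, (S y ω)^(2*J) ∂P := hmark
  -- union bound
  have hPs : (P {ω | p < ⨆ y : Y,
      |(∑ i, if X i ω = y then (1 : ℝ) else 0) / n - (μ {y}).toReal|}).toReal
      ≤ ∑ y, (P (A y)).toReal := by
    have hsub : {ω | p < ⨆ y : Y,
        |(∑ i, if X i ω = y then (1 : ℝ) else 0) / n - (μ {y}).toReal|} ⊆ ⋃ y, A y := by
      intro ω hω
      simp only [Set.mem_setOf_eq] at hω
      have hbd : BddAbove (Set.range fun y =>
          |(∑ i, if X i ω = y then (1:ℝ) else 0)/n - (μ {y}).toReal|) :=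
        (Set.finite_range _).bddAbove
      obtain ⟨y, hy⟩ := (lt_ciSup_iff hbd).mp hω
      exact Set.mem_iUnion.mpr ⟨y, hy⟩
    have hne : ∀ y ∈ Finset.univ, P (A y) ≠ ⊤ := fun y _ => measure_ne_top P _
    have h1 : P {ω | p < ⨆ y : Y,
        |(∑ i, if X i ω = y then (1 : ℝ) else 0) / n - (μ {y}).toReal|}
        ≤ ∑ y, P (A y) :=
      le_trans (measure_mono hsub) (measure_iUnion_fintype_le P A)
    calc _ ≤ (∑ y, P (A y)).toReal :=
          ENNReal.toReal_mono (ENNReal.sum_ne_top.mpr hne) h1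
      _ = ∑ y, (P (A y)).toReal := ENNReal.toReal_sum hne
  -- main case split
  rcases le_or_gt ((n:ℝ)*p^2) L with hcase | hcase
  · -- trivial case
    have hRHS1 : (1:ℝ) ≤ (L/((n:ℝ)*p^2))^k := by
      apply one_le_pow₀
      rw [le_div_iff₀ (by positivity)]
      linarith
    have hLHS1 : (P {ω | p < ⨆ y : Y,
        |(∑ i, if X i ω = y then (1 : ℝ) else 0) / n - (μ {y}).toReal|}).toReal ≤ 1 := by
      have h := prob_le_one (μ := P) (s := {ω | p < ⨆ y : Y,
        |(∑ i, if X i ω = y then (1 : ℝ) else 0) / n - (μ {y}).toReal|})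
      have h2 := ENNReal.toReal_mono ENNReal.one_ne_top h
      simpa using h2
    linarith
  · -- nontrivial case: np² > L
    rcases Nat.lt_or_ge k 2 with hk2 | hk2
    · -- k = 1 : variance argument
      have hk1 : k = 1 := by omega
      subst hk1
      -- variance per y
      have hvar : ∀ y, ∫ ω, (S y ω)^(2*1) ∂P ≤ (n:ℝ) * q y := by
        intro y
        have hξint : ∀ i j : Fin n, Integrable (fun ω => g y (X i ω) * g y (X j ω)) P := by
          intro i j
          apply hInt _ 1 (((measurable_of_finite (g y)).comp (hmeas i)).mul
            ((measurable_of_finite (g y)).comp (hmeas j)))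
          intro ω
          show |g y (X i ω) * g y (X j ω)| ≤ 1
          rw [abs_mul]
          exact mul_le_one₀ (hgb y _) (abs_nonneg _) (hgb y _)
        have hsq : ∀ ω, (S y ω)^(2*1) = ∑ i, ∑ j, g y (X i ω) * g y (X j ω) := by
          intro ω
          rw [hSdef]
          simp only [pow_succ, pow_zero, one_mul, mul_one]
          rw [Finset.sum_mul_sum]
        have hrw : ∫ ω, (S y ω)^(2*1) ∂P
            = ∑ i, ∑ j, ∫ ω, g y (X i ω) * g y (X j ω) ∂P := by
          rw [show (fun ω => (S y ω)^(2*1)) = fun ω => ∑ i, ∑ j, g y (X i ω) * g y (X j ω)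
            from funext hsq]
          rw [integral_finset_sum _ (fun i _ => integrable_finset_sum _ (fun j _ => hξint i j))]
          exact Finset.sum_congr rfl (fun i _ => integral_finset_sum _ (fun j _ => hξint i j))
        have hmean : ∀ i : Fin n, ∫ ω, g y (X i ω) ∂P = 0 := by
          intro i
          rw [hgint y (fun u => u) i]
          ring
        have hdiag : ∀ i : Fin n, ∫ ω, g y (X i ω) * g y (X i ω) ∂P ≤ q y := by
          intro i
          have h := hgint y (fun u => u * u) i
          have h2 : (fun ω => g y (X i ω) * g y (X i ω))
              = fun ω => (fun u => u*u) (g y (X i ω)) := rfl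
          rw [h2, h]
          nlinarith [hq0 y, hq1 y]
        have hoff : ∀ i j : Fin n, i ≠ j → ∫ ω, g y (X i ω) * g y (X j ω) ∂P = 0 := by
          intro i j hij
          have hξindep : ProbabilityTheory.iIndepFun
              (fun i => (g y) ∘ (X i)) P := hindep.comp _ (fun _ => measurable_of_finite (g y))
          have hind := hξindep.indepFun hij
          have h := ProbabilityTheory.IndepFun.integral_mul_eq_mul_integral hind
            ((measurable_of_finite (g y)).comp (hmeas i)).aestronglyMeasurable
            ((measurable_of_finite (g y)).comp (hmeas j)).aestronglyMeasurable
          have h2 : ∫ ω, g y (X i ω) * g y (X j ω) ∂P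
              = (∫ ω, g y (X i ω) ∂P) * ∫ ω, g y (X j ω) ∂P := h
          rw [h2, hmean i, hmean j, mul_zero]
        rw [hrw]
        have hrow : ∀ i : Fin n, ∑ j, ∫ ω, g y (X i ω) * g y (X j ω) ∂P ≤ q y := by
          intro i
          rw [Finset.sum_eq_add_sum_sdiff_singleton_of_mem (Finset.mem_univ i)]
          have hz : ∑ j ∈ Finset.univ \ {i}, ∫ ω, g y (X i ω) * g y (X j ω) ∂P = 0 := by
            apply Finset.sum_eq_zero
            intro j hj
            have hne : i ≠ j := by
              rw [Finset.mem_sdiff, Finset.mem_singleton] at hj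
              exact fun h => hj.2 h.symm
            exact hoff i j hne
          rw [hz, add_zero]
          exact hdiag i
        calc ∑ i, ∑ j, ∫ ω, g y (X i ω) * g y (X j ω) ∂P
            ≤ ∑ _i : Fin n, q y := Finset.sum_le_sum (fun i _ => hrow i)
          _ = (n:ℝ) * q y := by
              rw [Finset.sum_const, Finset.card_univ, Fintype.card_fin, nsmul_eq_mul]
      -- combine
      have hbd : ∀ y, (P (A y)).toReal ≤ (n:ℝ) * q y / ((n:ℝ)*p)^(2*1) := by
        intro y
        refine le_trans (hMarkov y 1 le_rfl) ?_
        gcongr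
        exact hvar y
      calc (P {ω | p < ⨆ y : Y,
          |(∑ i, if X i ω = y then (1 : ℝ) else 0) / n - (μ {y}).toReal|}).toReal
          ≤ ∑ y, (P (A y)).toReal := hPs
        _ ≤ ∑ y, (n:ℝ) * q y / ((n:ℝ)*p)^(2*1) := Finset.sum_le_sum (fun y _ => hbd y)
        _ = ((n:ℝ)/((n:ℝ)*p)^(2*1)) * ∑ y, q y := by
            rw [Finset.mul_sum]
            exact Finset.sum_congr rfl (fun y _ => by ring)
        _ = (n:ℝ)/((n:ℝ)*p)^(2*1) := by
            have hq : ∑ y, q y = 1 := hsum1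
            rw [hq, mul_one]
        _ ≤ (L/((n:ℝ)*p^2))^1 := by
            have h1 : (n:ℝ)/((n:ℝ)*p)^(2*1) = 1/((n:ℝ)*p^2) := by
              field_simp
              ring
            rw [pow_one, h1]
            gcongr
    · -- k ≥ 2 : MGF argument
      set J := k + ⌈Real.log (N:ℝ)⌉₊ with hJdef
      have hJk : k ≤ J := Nat.le_add_right _ _
      have hJ1 : 1 ≤ J := le_trans hk hJk
      have hJr0 : (0:ℝ) < J := by exact_mod_cast hJ1
      have hend := endgame hk2 hN1 hJdef
      rw [← hLdef] at hend
      have hpowid : Real.exp (J:ℝ) * ((n:ℝ)/(8*J))^J = (Real.exp 1/(8*(J:ℝ)))^J * (n:ℝ)^J := by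
        rw [(show Real.exp ((J:ℕ):ℝ) = Real.exp 1^J from by rw [← Real.exp_nat_mul, mul_one]),
          ← mul_pow, ← mul_pow]
        congr 1
        ring
      have hnum2 : 2*((2*J).factorial:ℝ) * Real.exp (J:ℝ) * ((n:ℝ)/(8*J))^J
          = 2*((2*J).factorial:ℝ) * ((Real.exp 1/(8*(J:ℝ)))^J*(n:ℝ)^J) := by
        rw [mul_assoc (2*((2*J).factorial:ℝ)), hpowid]
      have hpery : ∀ y : Y, (P (A y)).toReal
          ≤ 2*((2*J).factorial:ℝ) * Real.exp (J:ℝ) * ((n:ℝ)/(8*J))^J / ((n:ℝ)*p)^(2*J) := by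
        intro y
        refine le_trans (hMarkov y J hJ1) ?_
        gcongr
        exact hmoment y J hJ1
      have hle1 : L/((n:ℝ)*p^2) ≤ 1 := by
        rw [div_le_one (by positivity)]
        linarith
      have hiden : L^J * ((n:ℝ)^J / ((n:ℝ)*p)^(2*J)) = (L/((n:ℝ)*p^2))^J := by
        rw [pow_mul ((n:ℝ)*p) 2 J, ← div_pow, ← mul_pow]
        congr 1
        field_simp
      calc (P {ω | p < ⨆ y : Y,
          |(∑ i, if X i ω = y then (1 : ℝ) else 0) / n - (μ {y}).toReal|}).toReal
          ≤ ∑ y, (P (A y)).toReal := hPs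
        _ ≤ ∑ _y : Y, 2*((2*J).factorial:ℝ) * Real.exp (J:ℝ) * ((n:ℝ)/(8*J))^J
              / ((n:ℝ)*p)^(2*J) := Finset.sum_le_sum (fun y _ => hpery y)
        _ = (N:ℝ) * (2*((2*J).factorial:ℝ) * Real.exp (J:ℝ) * ((n:ℝ)/(8*J))^J
              / ((n:ℝ)*p)^(2*J)) := by
            rw [Finset.sum_const, Finset.card_univ, ← hNdef, nsmul_eq_mul]
        _ = (2*(N:ℝ)*((2*J).factorial) * (Real.exp 1/(8*(J:ℝ)))^J)
              * ((n:ℝ)^J / ((n:ℝ)*p)^(2*J)) := by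
            rw [hnum2]
            ring
        _ ≤ L^J * ((n:ℝ)^J / ((n:ℝ)*p)^(2*J)) :=
            mul_le_mul_of_nonneg_right hend (by positivity)
        _ = (L/((n:ℝ)*p^2))^J := hiden
        _ ≤ (L/((n:ℝ)*p^2))^k := pow_le_pow_of_le_one (by positivity) hle1 hJk
end

section
/- Let μ_n be the empirical measure of n i.i.d. samples from μ on finite Y, m_n = μ - μ_n, and ξ_n a random probability measure on Y. Suppose on an event A we have μ_n, μ ≪ ξ_n and ξ_n(y) > p for all y in the support of ξ_n. Then E[ ‖dm_n/dξ_n‖_{L^∞(ξ_n)}² 1_A ] ≤ log(e|Y|)/(p² n), and E[ ‖dm_n/dξ_n‖_{L^∞(ξ_n)} 1_A ] ≤ √(log(e|Y|)) / (p √n). -/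
open MeasureTheory Real

section AuxDensity

open ProbabilityTheory

private lemma dmb_indic_integral {Ω Y : Type*} [MeasurableSpace Ω] [MeasurableSpace Y]
    [MeasurableSingletonClass Y] [DecidableEq Y]
    (P : Measure Ω) [IsProbabilityMeasure P] (μ : Measure Y)
    (X : Ω → Y) (hm : Measurable X) (hl : Measure.map X P = μ) (y : Y) :
    ∫ ω, (if X ω = y then (1:ℝ) else 0) ∂P = (μ {y}).toReal := by
  have : (fun ω => if X ω = y then (1:ℝ) else 0) = (X ⁻¹' {y}).indicator (fun _ => (1:ℝ)) := by
    funext ω; simp [Set.indicator, Set.mem_preimage]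
  rw [this, integral_indicator_const _ (hm (measurableSet_singleton y))]
  rw [← hl, Measure.map_apply hm (measurableSet_singleton y)]
  simp; rfl

private lemma dmb_var_bound {Ω Y : Type*} [MeasurableSpace Ω] [MeasurableSpace Y]
    [MeasurableSingletonClass Y] [DecidableEq Y]
    (P : Measure Ω) [IsProbabilityMeasure P] (μ : Measure Y) [IsProbabilityMeasure μ]
    {n : ℕ} (hn : 1 ≤ n) (X : Fin n → Ω → Y)
    (hmeas : ∀ i, Measurable (X i))
    (hindep : ProbabilityTheory.iIndepFun X P)
    (hlaw : ∀ i, Measure.map (X i) P = μ) (y : Y) :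
    ∫ ω, ((μ {y}).toReal - (∑ i, if X i ω = y then (1:ℝ) else 0)/n)^2 ∂P
      ≤ (μ {y}).toReal / n := by
  set c : ℝ := (μ {y}).toReal with hc
  set g : Fin n → Ω → ℝ := fun i ω => c - (if X i ω = y then (1:ℝ) else 0) with hg
  have hgmeas : ∀ i, Measurable (g i) := fun i =>
    measurable_const.sub (Measurable.ite (hmeas i (measurableSet_singleton y))
      measurable_const measurable_const)
  have hc0 : 0 ≤ c := ENNReal.toReal_nonneg
  have hc1 : c ≤ 1 := by
    rw [hc]
    exact ENNReal.toReal_le_of_le_ofReal one_pos.le (by simpa using prob_le_one)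
  have hgbd : ∀ i ω, |g i ω| ≤ 2 := by
    intro i ω
    simp only [hg]
    split_ifs <;> rw [abs_le] <;> constructor <;> linarith
  have hgint : ∀ i, Integrable (g i) P := by
    intro i
    refine Integrable.mono' (integrable_const 2) ((hgmeas i).aestronglyMeasurable) ?_
    filter_upwards with ω using by simpa using hgbd i ω
  have hgint2 : ∀ i j, Integrable (fun ω => g i ω * g j ω) P := by
    intro i j
    refine Integrable.mono' (integrable_const 4) (((hgmeas i).mul (hgmeas j)).aestronglyMeasurable) ?_
    filter_upwards with ω
    calc |g i ω * g j ω| = |g i ω| * |g j ω| := abs_mul _ _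
    _ ≤ 2 * 2 := by
        exact mul_le_mul (hgbd i ω) (hgbd j ω) (abs_nonneg _) (by norm_num)
    _ = 4 := by norm_num
  have hI : ∀ i, Integrable (fun ω => (if X i ω = y then (1:ℝ) else 0)) P := by
    intro i
    refine Integrable.mono' (integrable_const 1)
      ((Measurable.ite (hmeas i (measurableSet_singleton y))
        measurable_const measurable_const).aestronglyMeasurable) ?_
    filter_upwards with ω using by split_ifs <;> simp
  have hgzero : ∀ i, ∫ ω, g i ω ∂P = 0 := by
    intro i
    simp only [hg]
    rw [integral_sub (integrable_const c) (hI i), integral_const,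
      dmb_indic_integral P μ (X i) (hmeas i) (hlaw i) y]
    simp [hc]
  have hkey : ∀ i j, ∫ ω, g i ω * g j ω ∂P = if i = j then c - c^2 else 0 := by
    intro i j
    by_cases hij : i = j
    · subst hij
      simp only [if_pos rfl]
      have hsq : ∀ ω, g i ω * g i ω = c^2 - (2*c - 1) * (if X i ω = y then (1:ℝ) else 0) := by
        intro ω; simp only [hg]; split_ifs <;> ring
      simp_rw [hsq]
      rw [integral_sub (integrable_const _) ((hI i).const_mul _), integral_const,
        integral_const_mul, dmb_indic_integral P μ (X i) (hmeas i) (hlaw i) y]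
      simp [hc]; ring
    · rw [if_neg hij]
      have hφ : Measurable (fun z : Y => c - (if z = y then (1:ℝ) else 0)) :=
        measurable_const.sub (Measurable.ite (measurableSet_singleton y)
          measurable_const measurable_const)
      have h1 : IndepFun (X i) (X j) P := hindep.indepFun hij
      have hind : IndepFun (g i) (g j) P :=
        h1.comp (φ := fun z => c - (if z = y then (1:ℝ) else 0))
          (ψ := fun z => c - (if z = y then (1:ℝ) else 0)) hφ hφ
      rw [show (fun ω => g i ω * g j ω) = g i * g j from rfl,
        hind.integral_mul_eq_mul_integral (hgint i).aestronglyMeasurable (hgint j).aestronglyMeasurable, hgzero, hgzero, mul_zero]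
  have hΔ : ∀ ω, c - (∑ i, if X i ω = y then (1:ℝ) else 0)/n = (∑ i, g i ω) / n := by
    intro ω
    simp only [hg, Finset.sum_sub_distrib, Finset.sum_const, Finset.card_univ, Fintype.card_fin,
      nsmul_eq_mul]
    have hn0 : (n:ℝ) ≠ 0 := Nat.cast_ne_zero.mpr (by omega)
    field_simp
  have hsum : ∫ ω, (∑ i, g i ω)^2 ∂P = n * (c - c^2) := by
    have hexp : ∀ ω, (∑ i, g i ω)^2 = ∑ i, ∑ j, g i ω * g j ω := by
      intro ω; rw [sq, Finset.sum_mul_sum]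
    simp_rw [hexp]
    rw [integral_finset_sum _ (fun i _ => integrable_finset_sum _ (fun j _ => hgint2 i j))]
    simp_rw [integral_finset_sum _ (fun j _ => hgint2 _ j)]
    simp_rw [hkey]
    simp [Finset.sum_ite_eq]; ring
  have hres : ∫ ω, (c - (∑ i, if X i ω = y then (1:ℝ) else 0)/n)^2 ∂P
      = (c - c^2) / n := by
    simp_rw [hΔ, div_pow]
    rw [integral_div, hsum]
    have hn0 : (n:ℝ) ≠ 0 := Nat.cast_ne_zero.mpr (by omega)
    field_simp
  rw [hres]
  have hn0 : (0:ℝ) < n := by positivity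
  have hle : c - c^2 ≤ c := by nlinarith [sq_nonneg c]
  gcongr

private lemma dmb_sum_singleton {Y : Type*} [Fintype Y] [MeasurableSpace Y]
    [MeasurableSingletonClass Y] (μ : Measure Y) [IsProbabilityMeasure μ] :
    (Finset.univ : Finset Y).sum (fun y => (μ {y}).toReal) = 1 := by
  have h1 : μ Set.univ = ∑ y, μ {y} := by
    rw [show (Set.univ : Set Y) = ⋃ y ∈ (Finset.univ : Finset Y), {y} by
      simp [Set.biUnion_univ]; exact (Set.iUnion_of_singleton Y).symm]
    rw [measure_biUnion_finset ?_ (fun y _ => measurableSet_singleton y)]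
    intro a _ b _ hab
    simp [Set.disjoint_singleton, hab]
  have h2 : ∀ y ∈ (Finset.univ : Finset Y), μ {y} ≠ ⊤ := fun y _ => measure_ne_top μ _
  rw [← ENNReal.toReal_sum h2, ← h1, measure_univ, ENNReal.toReal_one]

end AuxDensity

/-- Moment bounds for the `L^∞(ξₙ)` norm of the density of `mₙ = μ - μₙ` with
respect to a random measure `ξₙ`, on an event where `μₙ, μ ≪ ξₙ` and all atoms of
`ξₙ` exceed `p`. -/
theorem density_moment_bounds {Ω Y : Type*} [MeasurableSpace Ω]
    [Fintype Y] [Nonempty Y] [DecidableEq Y] [MeasurableSpace Y] [MeasurableSingletonClass Y]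
    (P : Measure Ω) [IsProbabilityMeasure P]
    (μ : Measure Y) [IsProbabilityMeasure μ]
    {n : ℕ} (hn : 1 ≤ n) (X : Fin n → Ω → Y)
    (hmeas : ∀ i, Measurable (X i))
    (hindep : ProbabilityTheory.iIndepFun X P)
    (hlaw : ∀ i, Measure.map (X i) P = μ)
    (ξ : Ω → Y → ℝ) (A : Set Ω) (hA : MeasurableSet A)
    (hξ0 : ∀ ω ∈ A, ∀ y, 0 ≤ ξ ω y) (hξ1 : ∀ ω ∈ A, ∑ y, ξ ω y = 1)
    (p : ℝ) (hp : 0 < p)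
    (hacμ : ∀ ω ∈ A, ∀ y, ξ ω y = 0 → (μ {y}).toReal = 0)
    (hacn : ∀ ω ∈ A, ∀ y, ξ ω y = 0 → (∑ i, if X i ω = y then (1 : ℝ) else 0) / n = 0)
    (hsupp : ∀ ω ∈ A, ∀ y, ξ ω y ≠ 0 → p < ξ ω y) :
    (∫ ω, Set.indicator A (fun ω =>
        (sSup ((fun y => |((μ {y}).toReal -
            (∑ i, if X i ω = y then (1 : ℝ) else 0) / n) / ξ ω y|) ''
          {y | ξ ω y ≠ 0})) ^ 2) ω ∂P ≤
      Real.log (Real.exp 1 * Fintype.card Y) / (p ^ 2 * n)) ∧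
    (∫ ω, Set.indicator A (fun ω =>
        sSup ((fun y => |((μ {y}).toReal -
            (∑ i, if X i ω = y then (1 : ℝ) else 0) / n) / ξ ω y|) ''
          {y | ξ ω y ≠ 0})) ω ∂P ≤
      Real.sqrt (Real.log (Real.exp 1 * Fintype.card Y)) / (p * Real.sqrt n)) := by
  classical
  set L : ℝ := Real.log (Real.exp 1 * Fintype.card Y) with hLdef
  have hL1 : 1 ≤ L := by
    have hcard : 1 ≤ (Fintype.card Y : ℝ) := by exact_mod_cast Fintype.card_pos
    rw [hLdef, Real.log_mul (Real.exp_ne_zero 1) (by positivity), Real.log_exp]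
    have := Real.log_nonneg hcard
    linarith
  have hn0 : (0:ℝ) < n := by positivity
  -- abbreviations
  set Δ : Y → Ω → ℝ := fun y ω =>
    (μ {y}).toReal - (∑ i, if X i ω = y then (1 : ℝ) else 0) / n with hΔdef
  set D : Ω → ℝ := fun ω => ∑ y, (Δ y ω)^2 with hDdef
  set F : Ω → ℝ := fun ω =>
    sSup ((fun y => |((μ {y}).toReal -
      (∑ i, if X i ω = y then (1 : ℝ) else 0) / n) / ξ ω y|) '' {y | ξ ω y ≠ 0}) with hFdef
  -- bounds on Δ
  have hΔbd : ∀ y ω, |Δ y ω| ≤ 1 := by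
    intro y ω
    have hc0 : 0 ≤ (μ {y}).toReal := ENNReal.toReal_nonneg
    have hc1 : (μ {y}).toReal ≤ 1 :=
      ENNReal.toReal_le_of_le_ofReal one_pos.le (by simpa using prob_le_one)
    have hs0 : 0 ≤ (∑ i, if X i ω = y then (1 : ℝ) else 0) :=
      Finset.sum_nonneg (fun i _ => by split_ifs <;> norm_num)
    have hs1 : (∑ i, if X i ω = y then (1 : ℝ) else 0) ≤ n := by
      calc (∑ i, if X i ω = y then (1 : ℝ) else 0) ≤ ∑ _i : Fin n, (1:ℝ) :=
            Finset.sum_le_sum (fun i _ => by split_ifs <;> norm_num)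
      _ = n := by simp
    have h1 : 0 ≤ (∑ i, if X i ω = y then (1 : ℝ) else 0) / n := by positivity
    have h2 : (∑ i, if X i ω = y then (1 : ℝ) else 0) / n ≤ 1 := by
      rw [div_le_one hn0]; exact hs1
    rw [hΔdef, abs_le]
    constructor <;> simp only <;> linarith
  have hΔmeas : ∀ y, Measurable (Δ y) := by
    intro y
    apply measurable_const.sub
    apply Measurable.div_const
    exact Finset.measurable_sum _ (fun i _ =>
      Measurable.ite (hmeas i (measurableSet_singleton y)) measurable_const measurable_const)
  have hD0 : ∀ ω, 0 ≤ D ω := fun ω => Finset.sum_nonneg (fun y _ => sq_nonneg _)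
  have hDmeas : Measurable D :=
    Finset.measurable_sum _ (fun y _ => ((hΔmeas y).pow measurable_const))
  have hDint : Integrable D P := by
    apply integrable_finset_sum
    intro y _
    refine Integrable.mono' (integrable_const 1)
      (((hΔmeas y).pow measurable_const).aestronglyMeasurable) ?_
    filter_upwards with ω
    rw [Real.norm_eq_abs, abs_of_nonneg (sq_nonneg _)]
    nlinarith [sq_abs (Δ y ω), hΔbd y ω, abs_nonneg (Δ y ω)]
  -- integral of D
  have hDsum : ∫ ω, D ω ∂P ≤ 1 / n := by
    rw [hDdef]
    rw [integral_finset_sum _ (fun y _ => by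
      refine Integrable.mono' (integrable_const 1)
        (((hΔmeas y).pow measurable_const).aestronglyMeasurable) ?_
      filter_upwards with ω
      rw [Real.norm_eq_abs, abs_of_nonneg (sq_nonneg _)]
      nlinarith [sq_abs (Δ y ω), hΔbd y ω, abs_nonneg (Δ y ω)])]
    calc (∑ y, ∫ ω, (Δ y ω)^2 ∂P) ≤ ∑ y, (μ {y}).toReal / n := by
          apply Finset.sum_le_sum
          intro y _
          exact dmb_var_bound P μ hn X hmeas hindep hlaw y
    _ = (∑ y, (μ {y}).toReal) / n := by rw [Finset.sum_div]
    _ = 1 / n := by rw [dmb_sum_singleton μ]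
  -- pointwise bounds on F
  have hF0 : ∀ ω, 0 ≤ F ω := by
    intro ω
    apply Real.sSup_nonneg
    rintro x ⟨y, _, rfl⟩
    exact abs_nonneg _
  have hFub : ∀ ω ∈ A, F ω ≤ Real.sqrt (D ω) / p := by
    intro ω hω
    apply Real.sSup_le
    · rintro x ⟨y, hy, rfl⟩
      have hpy : p < ξ ω y := hsupp ω hω y hy
      have hξpos : 0 < ξ ω y := lt_trans hp hpy
      calc |((μ {y}).toReal - (∑ i, if X i ω = y then (1 : ℝ) else 0) / n) / ξ ω y|
          = |Δ y ω| / ξ ω y := by rw [abs_div, abs_of_pos hξpos]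
      _ ≤ |Δ y ω| / p := by
          apply div_le_div_of_nonneg_left (abs_nonneg _) hp hpy.le
      _ ≤ Real.sqrt (D ω) / p := by
          gcongr
          rw [show |Δ y ω| = Real.sqrt ((Δ y ω)^2) from (Real.sqrt_sq_eq_abs _).symm]
          apply Real.sqrt_le_sqrt
          exact Finset.single_le_sum (fun z _ => sq_nonneg (Δ z ω)) (Finset.mem_univ y)
    · positivity
  have hFp : ∀ ω ∈ A, F ω ≤ 1 / p := by
    intro ω hω
    apply Real.sSup_le
    · rintro x ⟨y, hy, rfl⟩
      have hpy : p < ξ ω y := hsupp ω hω y hy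
      have hξpos : 0 < ξ ω y := lt_trans hp hpy
      calc |((μ {y}).toReal - (∑ i, if X i ω = y then (1 : ℝ) else 0) / n) / ξ ω y|
          = |Δ y ω| / ξ ω y := by rw [abs_div, abs_of_pos hξpos]
      _ ≤ |Δ y ω| / p := div_le_div_of_nonneg_left (abs_nonneg _) hp hpy.le
      _ ≤ 1 / p := by gcongr; exact hΔbd y ω
    · positivity
  have hFsq : ∀ ω ∈ A, (F ω)^2 ≤ D ω / p^2 := by
    intro ω hω
    calc (F ω)^2 ≤ (Real.sqrt (D ω) / p)^2 := by
          apply pow_le_pow_left₀ (hF0 ω) (hFub ω hω)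
    _ = D ω / p^2 := by
        rw [div_pow, Real.sq_sqrt (hD0 ω)]
  -- the key first-part bound
  have hG_eq : Set.indicator A (fun ω => (F ω)^2) = fun ω => (Set.indicator A F ω)^2 := by
    funext ω
    by_cases hω : ω ∈ A
    · rw [Set.indicator_of_mem hω, Set.indicator_of_mem hω]
    · rw [Set.indicator_of_notMem hω, Set.indicator_of_notMem hω]
      simp
  have part1 : ∫ ω, Set.indicator A (fun ω => (F ω)^2) ω ∂P ≤ L / (p ^ 2 * n) := by
    have hRHS : (0:ℝ) ≤ L / (p ^ 2 * n) := by
      apply div_nonneg (by linarith) (by positivity)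
    by_cases hGint : Integrable (Set.indicator A (fun ω => (F ω)^2)) P
    · have hmono : ∀ ω, Set.indicator A (fun ω => (F ω)^2) ω ≤ D ω / p^2 := by
        intro ω
        by_cases hω : ω ∈ A
        · rw [Set.indicator_of_mem hω]; exact hFsq ω hω
        · rw [Set.indicator_of_notMem hω]; positivity
      calc ∫ ω, Set.indicator A (fun ω => (F ω)^2) ω ∂P
          ≤ ∫ ω, D ω / p^2 ∂P := integral_mono hGint (hDint.div_const _) hmono
      _ = (∫ ω, D ω ∂P) / p^2 := integral_div _ _
      _ ≤ (1/n) / p^2 := by gcongr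
      _ = 1 / (p^2 * n) := by field_simp
      _ ≤ L / (p^2 * n) := by gcongr
    · rw [integral_undef hGint]
      exact hRHS
  refine ⟨part1, ?_⟩
  -- second part
  set t : ℝ := Real.sqrt L / (p * Real.sqrt n) with htdef
  have ht0 : 0 < t := by
    rw [htdef]
    have : (0:ℝ) < Real.sqrt L := Real.sqrt_pos.mpr (by linarith)
    have : (0:ℝ) < Real.sqrt n := Real.sqrt_pos.mpr hn0
    positivity
  have htsq : t^2 = L / (p^2 * n) := by
    rw [htdef, div_pow, mul_pow, Real.sq_sqrt (by linarith : (0:ℝ) ≤ L),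
      Real.sq_sqrt hn0.le]
  have hRHS2 : (0:ℝ) ≤ t := ht0.le
  by_cases hG1 : Integrable (Set.indicator A F) P
  · -- integrability of square
    have hG1sq : Integrable (fun ω => (Set.indicator A F ω)^2) P := by
      refine Integrable.mono' ((hG1.norm).const_mul (1/p))
        (hG1.aestronglyMeasurable.aemeasurable.pow_const 2).aestronglyMeasurable ?_
      filter_upwards with ω
      rw [Real.norm_eq_abs, abs_of_nonneg (sq_nonneg _), sq]
      have h1 : 0 ≤ Set.indicator A F ω := by
        by_cases hω : ω ∈ A
        · rw [Set.indicator_of_mem hω]; exact hF0 ω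
        · rw [Set.indicator_of_notMem hω]
      have h2 : Set.indicator A F ω ≤ 1/p := by
        by_cases hω : ω ∈ A
        · rw [Set.indicator_of_mem hω]; exact hFp ω hω
        · rw [Set.indicator_of_notMem hω]; positivity
      calc Set.indicator A F ω * Set.indicator A F ω
          ≤ (1/p) * Set.indicator A F ω := by
            apply mul_le_mul_of_nonneg_right h2 h1
      _ = (1/p) * ‖Set.indicator A F ω‖ := by rw [Real.norm_eq_abs, abs_of_nonneg h1]
    have hsqbound : ∫ ω, (Set.indicator A F ω)^2 ∂P ≤ t^2 := by
      rw [htsq, ← hG_eq]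
      exact part1
    -- AM-GM pointwise: x ≤ (t + x²/t)/2
    have hptwise : ∀ ω, Set.indicator A F ω ≤ (t + (Set.indicator A F ω)^2 / t) / 2 := by
      intro ω
      set x := Set.indicator A F ω
      have hkey : 2*t*x ≤ t^2 + x^2 := by nlinarith [sq_nonneg (x - t)]
      calc x = (2*t*x)/(2*t) := by field_simp
      _ ≤ (t^2 + x^2)/(2*t) := by gcongr
      _ = (t + x^2/t)/2 := by field_simp
    calc ∫ ω, Set.indicator A F ω ∂P
        ≤ ∫ ω, (t + (Set.indicator A F ω)^2 / t) / 2 ∂P := by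
          apply integral_mono hG1 ?_ hptwise
          exact (((integrable_const t).add (hG1sq.div_const t)).div_const 2)
    _ = (t + (∫ ω, (Set.indicator A F ω)^2 ∂P) / t) / 2 := by
        rw [integral_div, integral_add (integrable_const t) (hG1sq.div_const t),
          integral_const, integral_div]
        simp
    _ ≤ (t + t^2 / t) / 2 := by gcongr
    _ = t := by field_simp; ring
  · rw [integral_undef hG1]
    exact hRHS2
end

section
/- Let μ be a probability measure on a finite set with minimal positive mass p_∧, and let b ∈ [3p_∧/4, 1 - 3p_∧/4]. If δ ≤ p_∧/24, then the unique q* ∈ (0,b) satisfying kl(q*, b) = δ (where kl is the binary KL divergence) satisfies q* ≥ p_∧/2. -/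
open Real

/-- The minimal positive mass of a measure `μ` on a finite set. -/
noncomputable def pmin {Y : Type*} [Fintype Y] (μ : Y → ℝ) : ℝ :=
  sInf (μ '' {y | 0 < μ y})

/-- Auxiliary: `2 log y ≤ y - 1/y` for `y ≥ 1`. -/
lemma two_mul_log_le_aux (y : ℝ) (hy : 1 ≤ y) : 2 * Real.log y ≤ y - y⁻¹ := by
  have hd : ∀ x : ℝ, x ≠ 0 → HasDerivAt (fun x : ℝ => x - x⁻¹ - 2 * Real.log x)
      (1 - (-(x ^ 2)⁻¹) - 2 * x⁻¹) x := fun x hx0 =>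
    ((hasDerivAt_id x).sub (hasDerivAt_inv hx0)).sub
      ((Real.hasDerivAt_log hx0).const_mul 2)
  have hmono : MonotoneOn (fun x : ℝ => x - x⁻¹ - 2 * Real.log x) (Set.Ici 1) := by
    apply monotoneOn_of_deriv_nonneg (convex_Ici 1)
    · apply ContinuousOn.sub
      · apply ContinuousOn.sub continuousOn_id
        exact ContinuousOn.inv₀ continuousOn_id (fun x hx => by
          have : (1:ℝ) ≤ x := hx; positivity)
      · apply ContinuousOn.mul continuousOn_const
        exact Real.continuousOn_log.mono (by
          intro x hx
          have : (1:ℝ) ≤ x := hx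
          simp only [Set.mem_compl_iff, Set.mem_singleton_iff]
          positivity)
    · intro x hx
      rw [interior_Ici] at hx
      have hx0 : x ≠ 0 := by have : (1:ℝ) < x := hx; positivity
      exact (hd x hx0).differentiableAt.differentiableWithinAt
    · intro x hx
      rw [interior_Ici] at hx
      have hx1 : (1:ℝ) < x := hx
      have hx0 : x ≠ 0 := by positivity
      rw [(hd x hx0).deriv]
      have h2 : (x ^ 2)⁻¹ = x⁻¹ * x⁻¹ := by rw [sq, mul_inv]
      have h3 : x⁻¹ ≤ 1 := by rw [inv_le_one_iff₀]; right; exact le_of_lt hx1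
      nlinarith [sq_nonneg (1 - x⁻¹)]
  have := hmono (Set.mem_Ici.mpr le_rfl) (Set.mem_Ici.mpr hy) hy
  simp only [Real.log_one, inv_one] at this
  linarith

/-- If `δ ≤ p_∧/24` and `b ∈ [3p_∧/4, 1 - 3p_∧/4]`, then any `q ∈ (0,b)` with
`kl(q,b) = δ` satisfies `q ≥ p_∧/2`. -/
theorem kl_root_lower_bound {Y : Type*} [Fintype Y]
    (μ : Y → ℝ) (hμ0 : ∀ y, 0 ≤ μ y) (hμ1 : ∑ y, μ y = 1)
    (b δ q : ℝ)
    (hb : b ∈ Set.Icc (3 * pmin μ / 4) (1 - 3 * pmin μ / 4))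
    (hδ : δ ≤ pmin μ / 24)
    (hq : q ∈ Set.Ioo 0 b)
    (hkl : q * Real.log (q / b) + (1 - q) * Real.log ((1 - q) / (1 - b)) = δ) :
    pmin μ / 2 ≤ q := by
  set p := pmin μ with hp_def
  obtain ⟨hq0, hqb⟩ := hq
  obtain ⟨hb1, hb2⟩ := hb
  rcases le_or_gt p 0 with hp | hp
  · linarith
  by_contra hcon
  push_neg at hcon
  have hbpos : 0 < b := by linarith
  have hb1' : b < 1 := by linarith
  have h1q : 0 < 1 - q := by linarith
  have h1b : 0 < 1 - b := by linarith
  -- Step A : (1-q) log((1-q)/(1-b)) ≥ b - q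
  have hlogr : Real.log ((1 - b) / (1 - q)) ≤ (1 - b) / (1 - q) - 1 :=
    Real.log_le_sub_one_of_pos (by positivity)
  have heqr : Real.log ((1 - q) / (1 - b)) = - Real.log ((1 - b) / (1 - q)) := by
    rw [Real.log_div h1q.ne' h1b.ne', Real.log_div h1b.ne' h1q.ne']; ring
  have hrmul : (1 - q) * ((1 - b) / (1 - q)) = 1 - b := by field_simp
  have hA : b - q ≤ (1 - q) * Real.log ((1 - q) / (1 - b)) := by
    have h := mul_le_mul_of_nonneg_left hlogr h1q.le
    rw [mul_sub, hrmul] at h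
    rw [heqr]
    linarith
  -- Step B : q log(q/b) ≥ -(uv) + u³/v  where u = √q, v = √b
  set u := Real.sqrt q with hu_def
  set v := Real.sqrt b with hv_def
  have hu2 : u ^ 2 = q := Real.sq_sqrt hq0.le
  have hv2 : v ^ 2 = b := Real.sq_sqrt hbpos.le
  have hu0 : 0 < u := Real.sqrt_pos.mpr hq0
  have hv0 : 0 < v := Real.sqrt_pos.mpr hbpos
  have huv : u < v := Real.sqrt_lt_sqrt hq0.le hqb
  set s := v / u with hs_def
  have hs1 : 1 ≤ s := by rw [le_div_iff₀ hu0]; linarith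
  have hs0 : 0 < s := by positivity
  have hsq : s ^ 2 = b / q := by
    rw [hs_def, div_pow, hu2, hv2]
  have hlogbq : Real.log (b / q) = 2 * Real.log s := by
    rw [← hsq, Real.log_pow]
    push_cast
    ring
  have hlogs : 2 * Real.log s ≤ s - s⁻¹ := two_mul_log_le_aux s hs1
  have hlqb : Real.log (q / b) = - Real.log (b / q) := by
    rw [Real.log_div hq0.ne' hbpos.ne', Real.log_div hbpos.ne' hq0.ne']; ring
  have hlq : -(s - s⁻¹) ≤ Real.log (q / b) := by
    rw [hlqb, hlogbq]; linarith
  have hqs : q * (s - s⁻¹) = u * v - u ^ 3 / v := by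
    rw [hs_def, inv_div, ← hu2]
    field_simp
  have hB : -(u * v) + u ^ 3 / v ≤ q * Real.log (q / b) := by
    have h := mul_le_mul_of_nonneg_left hlq hq0.le
    rw [mul_neg, hqs] at h
    linarith
  -- combine
  have hkey : (b - q) - u * v + u ^ 3 / v ≤ δ := by
    rw [← hkl]; linarith
  have hkey2 : (v ^ 2 - u ^ 2) * v - u * v ^ 2 + u ^ 3 ≤ δ * v := by
    have h := mul_le_mul_of_nonneg_right hkey hv0.le
    have hexp : ((b - q) - u * v + u ^ 3 / v) * v
        = (v ^ 2 - u ^ 2) * v - u * v ^ 2 + u ^ 3 := by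
      rw [← hu2, ← hv2]; field_simp
    rw [hexp] at h
    exact h
  -- arithmetic contradiction
  have hq_small : u ^ 2 < p / 2 := by rw [hu2]; exact hcon
  have hb_big : 3 * p / 4 ≤ v ^ 2 := by rw [hv2]; exact hb1
  have hA1 : v ^ 2 / 3 < v ^ 2 - u ^ 2 := by nlinarith
  have hvu : 0 < v - u := by linarith
  have h4 : v ^ 2 / 3 < (v - u) * (2 * v) :=
    calc v ^ 2 / 3 < v ^ 2 - u ^ 2 := hA1
      _ = (v - u) * (v + u) := by ring
      _ ≤ (v - u) * (2 * v) := mul_le_mul_of_nonneg_left (by linarith) hvu.le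
  have hA2 : v / 6 < v - u := by
    have h2v : (0:ℝ) < 2 * v := by linarith
    have hveq : v / 6 = v ^ 2 / 3 / (2 * v) := by field_simp; ring
    rw [hveq, div_lt_iff₀ h2v]
    exact h4
  have hδv : δ * v ≤ p / 24 * v := mul_le_mul_of_nonneg_right hδ hv0.le
  have h3 : (v / 6) * (v ^ 2 / 3) < (v - u) * (v ^ 2 - u ^ 2) :=
    mul_lt_mul'' hA2 hA1 (by positivity) (by positivity)
  have hfac : (v ^ 2 - u ^ 2) * v - u * v ^ 2 + u ^ 3 = (v - u) * (v ^ 2 - u ^ 2) := by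
    ring
  have hpv : p * v ≤ 4 * v ^ 2 / 3 * v :=
    mul_le_mul_of_nonneg_right (by linarith) hv0.le
  have hvvv : (v / 6) * (v ^ 2 / 3) = v ^ 2 * v / 18 := by ring
  rw [hfac] at hkey2
  -- δ * v ≤ p/24 * v ≤ v³/18 < (v-u)(v²-u²) ≤ δ * v, contradiction
  have : p / 24 * v ≤ v ^ 2 * v / 18 := by linarith
  linarith
end

section
/- Let {Y_k : k ≥ 1} be i.i.d. real random variables with zero mean, |Y_k| ≤ ζ almost surely, and variance σ². Define X_0 = 0 and X_{k+1} = (1 - λ_k) X_k + λ_k Y_{k+1}, where λ_k = 1/(1 + (1-γ)k) for a fixed γ ∈ (0,1). Then for every k and every t with |t| < 1/(ζ λ_k), E[exp(t X_{k+1})] ≤ exp( t² σ² λ_k / (1 - ζ λ_k |t|) ). -/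
open MeasureTheory Real

/-- The rescaled linear step size `λ_k = 1/(1 + (1-γ)k)`. -/
noncomputable def stepSize (γ : ℝ) (k : ℕ) : ℝ := 1 / (1 + (1 - γ) * k)

section Aux

lemma stepDen_pos' {γ : ℝ} (hγ1 : γ < 1) (k : ℕ) : (0:ℝ) < 1 + (1 - γ) * k := by
  have : (0:ℝ) ≤ (1 - γ) * k := mul_nonneg (by linarith) (Nat.cast_nonneg k)
  linarith

lemma integrable_exp_mul' {Ω : Type*} [MeasurableSpace Ω] (P : Measure Ω)
    [IsProbabilityMeasure P] {Z : Ω → ℝ} (hm : Measurable Z) (C : ℝ)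
    (hb : ∀ᵐ ω ∂P, |Z ω| ≤ C) (a : ℝ) :
    Integrable (fun ω => Real.exp (a * Z ω)) P := by
  refine Integrable.mono' (integrable_const (Real.exp (|a| * C)))
    ((hm.const_mul a).exp.aestronglyMeasurable) ?_
  filter_upwards [hb] with ω hω
  rw [norm_eq_abs, abs_of_pos (exp_pos _)]
  refine exp_le_exp.mpr (le_trans (le_abs_self _) ?_)
  rw [abs_mul]
  exact mul_le_mul_of_nonneg_left hω (abs_nonneg a)

lemma mgf_single' {Ω : Type*} [MeasurableSpace Ω] (P : Measure Ω) [IsProbabilityMeasure P]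
    (ζ σ : ℝ) (Z : Ω → ℝ) (hm : Measurable Z) (hb : ∀ᵐ ω ∂P, |Z ω| ≤ ζ)
    (h0 : ∫ ω, Z ω ∂P = 0) (h2 : ∫ ω, (Z ω) ^ 2 ∂P = σ ^ 2) (s : ℝ) (hs : ζ * |s| ≤ 1) :
    ∫ ω, Real.exp (s * Z ω) ∂P ≤ Real.exp ((3/4) * s ^ 2 * σ ^ 2) := by
  have hZint : Integrable Z P := by
    refine Integrable.mono' (integrable_const ζ) hm.aestronglyMeasurable ?_
    filter_upwards [hb] with ω hω; rwa [norm_eq_abs]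
  have hZ2int : Integrable (fun ω => (Z ω) ^ 2) P := by
    refine Integrable.mono' (integrable_const (ζ ^ 2)) ((hm.pow_const 2).aestronglyMeasurable) ?_
    filter_upwards [hb] with ω hω
    rw [norm_eq_abs, abs_of_nonneg (sq_nonneg _), ← sq_abs]
    exact pow_le_pow_left₀ (abs_nonneg _) hω 2
  have hexpint : Integrable (fun ω => Real.exp (s * Z ω)) P := integrable_exp_mul' P hm ζ hb s
  have hquad : (fun ω => 1 + s * Z ω + (3/4) * (s * Z ω) ^ 2)
      = fun ω => 1 + s * Z ω + (3/4 * s ^ 2) * (Z ω) ^ 2 := by funext ω; ring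
  have hquadint : Integrable (fun ω => 1 + s * Z ω + (3/4) * (s * Z ω) ^ 2) P := by
    rw [hquad]
    exact ((integrable_const 1).add (hZint.const_mul s)).add (hZ2int.const_mul _)
  have hpt : ∀ᵐ ω ∂P, Real.exp (s * Z ω) ≤ 1 + s * Z ω + (3/4) * (s * Z ω) ^ 2 := by
    filter_upwards [hb] with ω hω
    have hx : |s * Z ω| ≤ 1 := by
      rw [abs_mul]
      calc |s| * |Z ω| ≤ |s| * ζ := mul_le_mul_of_nonneg_left hω (abs_nonneg s)
        _ = ζ * |s| := mul_comm _ _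
        _ ≤ 1 := hs
    have hbd := Real.exp_bound hx (n := 2) (by norm_num)
    have h1 := (abs_sub_le_iff.1 hbd).1
    have hsum : ∑ m ∈ Finset.range 2, (s * Z ω) ^ m / m.factorial = 1 + s * Z ω := by
      simp [Finset.sum_range_succ]
    rw [hsum] at h1
    have : (2 : ℕ).succ / ((2 : ℕ).factorial * (2:ℕ) : ℝ) = 3 / 4 := by norm_num [Nat.factorial]
    rw [this] at h1
    nlinarith [sq_abs (s * Z ω)]
  calc ∫ ω, Real.exp (s * Z ω) ∂P
      ≤ ∫ ω, (1 + s * Z ω + (3/4) * (s * Z ω) ^ 2) ∂P := integral_mono_ae hexpint hquadint hpt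
    _ = 1 + (3/4) * s ^ 2 * σ ^ 2 := by
        rw [hquad]
        have i1 : Integrable (fun ω => 1 + s * Z ω) P := by
          exact (integrable_const 1).add (hZint.const_mul s)
        have i2 : Integrable (fun ω => 3/4 * s ^ 2 * Z ω ^ 2) P := hZ2int.const_mul _
        rw [integral_add i1 i2, integral_add (integrable_const 1) (hZint.const_mul s),
            integral_const, integral_const_mul, integral_const_mul, h0, h2]
        simp
    _ ≤ Real.exp ((3/4) * s ^ 2 * σ ^ 2) := by
        have := Real.add_one_le_exp ((3/4) * s ^ 2 * σ ^ 2); linarith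

end Aux



lemma stepSize_pos {γ : ℝ} (hγ1 : γ < 1) (k : ℕ) : 0 < stepSize γ k :=
  one_div_pos.mpr (stepDen_pos' hγ1 k)

lemma stepSize_le_one {γ : ℝ} (hγ1 : γ < 1) (k : ℕ) : stepSize γ k ≤ 1 := by
  have h1 : (0:ℝ) ≤ (1 - γ) * k := mul_nonneg (by linarith) (Nat.cast_nonneg k)
  rw [stepSize, div_le_one (by linarith)]
  linarith

lemma stepSize_key {γ : ℝ} (hγ0 : 0 < γ) (hγ1 : γ < 1) (k : ℕ) :
    stepSize γ k * (1 - stepSize γ (k + 1)) ≤ stepSize γ (k + 1) := by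
  have hA := stepDen_pos' hγ1 k
  have hB := stepDen_pos' hγ1 (k + 1)
  rw [stepSize, stepSize]
  rw [div_mul_eq_mul_div, div_le_div_iff₀ hA hB]
  rw [one_mul, sub_mul, one_mul, one_div_mul_cancel hB.ne']
  push_cast
  have hk : (0:ℝ) ≤ (k:ℝ) := Nat.cast_nonneg k
  nlinarith


/-- MGF bound for the non-stationary autoregressive recursion
`X_{k+1} = (1-λ_k)X_k + λ_k Y_{k+1}` with i.i.d. zero-mean `ζ`-bounded noise of
variance `σ²`: for `|t| < 1/(ζ λ_k)`,
`E[exp(t X_{k+1})] ≤ exp(t² σ² λ_k / (1 - ζ λ_k |t|))`. -/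
theorem ar_mgf_bound {Ω : Type*} [MeasurableSpace Ω] (P : Measure Ω)
    [IsProbabilityMeasure P]
    (γ ζ σ : ℝ) (hγ0 : 0 < γ) (hγ1 : γ < 1) (hζ : 0 < ζ)
    (Y : ℕ → Ω → ℝ)
    (hmeas : ∀ k, Measurable (Y k))
    (hindep : ProbabilityTheory.iIndepFun Y P)
    (hident : ∀ k, Measure.map (Y k) P = Measure.map (Y 0) P)
    (hmean : ∀ k, ∫ ω, Y k ω ∂P = 0)
    (hbdd : ∀ k, ∀ᵐ ω ∂P, |Y k ω| ≤ ζ)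
    (hvar : ∀ k, ∫ ω, (Y k ω) ^ 2 ∂P = σ ^ 2)
    (X : ℕ → Ω → ℝ)
    (hX0 : X 0 = fun _ => 0)
    (hX : ∀ k, X (k + 1) = fun ω =>
      (1 - stepSize γ k) * X k ω + stepSize γ k * Y (k + 1) ω) :
    ∀ k, ∀ t : ℝ, |t| < 1 / (ζ * stepSize γ k) →
      ∫ ω, Real.exp (t * X (k + 1) ω) ∂P ≤
        Real.exp (t ^ 2 * σ ^ 2 * stepSize γ k / (1 - ζ * stepSize γ k * |t|)) := by
  -- measurability of X
  have hXm : ∀ k, Measurable (X k) := by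
    intro k
    induction k with
    | zero => rw [hX0]; exact measurable_const
    | succ k ih => rw [hX k]; exact (ih.const_mul _).add ((hmeas (k+1)).const_mul _)
  -- a.s. boundedness of X
  have hXbdd : ∀ k, ∀ᵐ ω ∂P, |X k ω| ≤ ζ := by
    intro k
    induction k with
    | zero =>
      refine Filter.Eventually.of_forall fun ω => ?_
      rw [hX0]; simpa using hζ.le
    | succ k ih =>
      have hs0 := stepSize_pos hγ1 k
      have hs1 := stepSize_le_one hγ1 k
      filter_upwards [ih, hbdd (k+1)] with ω h1 h2
      rw [hX k]
      calc |(1 - stepSize γ k) * X k ω + stepSize γ k * Y (k+1) ω|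
          ≤ |(1 - stepSize γ k) * X k ω| + |stepSize γ k * Y (k+1) ω| := abs_add_le _ _
        _ = (1 - stepSize γ k) * |X k ω| + stepSize γ k * |Y (k+1) ω| := by
            rw [abs_mul, abs_mul, abs_of_nonneg (by linarith : (0:ℝ) ≤ 1 - stepSize γ k),
              abs_of_nonneg hs0.le]
        _ ≤ (1 - stepSize γ k) * ζ + stepSize γ k * ζ :=
            add_le_add (mul_le_mul_of_nonneg_left h1 (by linarith))
              (mul_le_mul_of_nonneg_left h2 hs0.le)
        _ = ζ := by ring
  -- X k is a measurable function of the prefix (Y i)_{i ≤ k}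
  have hcomp : ∀ k, ∃ g : ((Finset.range (k+1) : Finset ℕ) → ℝ) → ℝ,
      Measurable g ∧ ∀ ω, X k ω = g (fun i => Y (i : ℕ) ω) := by
    intro k
    induction k with
    | zero => exact ⟨fun _ => 0, measurable_const, fun ω => by rw [hX0]⟩
    | succ k ih =>
      obtain ⟨g, hgm, hgX⟩ := ih
      have hmem : ∀ i : (Finset.range (k+1) : Finset ℕ), (i : ℕ) ∈ Finset.range (k+1+1) := by
        intro i; have := i.2; simp only [Finset.mem_range] at this ⊢; omega
      refine ⟨fun v => (1 - stepSize γ k) * g (fun i => v ⟨i, hmem i⟩)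
          + stepSize γ k * v ⟨k+1, by simp⟩, ?_, ?_⟩
      · exact ((hgm.comp (measurable_pi_lambda _ fun i => measurable_pi_apply _)).const_mul
          _).add ((measurable_pi_apply _).const_mul _)
      · intro ω; simp only [hX k]; rw [hgX ω]
  -- independence of X k and Y (k+1)
  have hind : ∀ k, ProbabilityTheory.IndepFun (X k) (Y (k+1)) P := by
    intro k
    obtain ⟨g, hgm, hgX⟩ := hcomp k
    have hdisj : Disjoint (Finset.range (k+1)) ({k+1} : Finset ℕ) := by simp
    have h := hindep.indepFun_finset (Finset.range (k+1)) {k+1} hdisj hmeas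
    have h2 := h.comp hgm
      (measurable_pi_apply (⟨k+1, Finset.mem_singleton_self _⟩ : ({k+1} : Finset ℕ)))
    have hXeq : X k = g ∘ (fun a (i : (Finset.range (k+1) : Finset ℕ)) => Y i a) :=
      funext hgX
    have hYeq : Y (k+1) = (fun v : (({k+1} : Finset ℕ) → ℝ) =>
        v ⟨k+1, Finset.mem_singleton_self _⟩) ∘ (fun a (i : ({k+1} : Finset ℕ)) => Y i a) := rfl
    rw [hXeq, hYeq]
    exact h2
  -- main induction
  intro k
  induction k with
  | zero =>
    intro t ht
    have hstep0 : stepSize γ 0 = 1 := by simp [stepSize]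
    rw [hstep0] at ht ⊢
    have hX1 : X 1 = Y 1 := by
      funext ω; rw [hX 0, hX0, hstep0]; simp
    have hζt' : |t| * ζ < 1 := by
      rw [mul_one, lt_div_iff₀ hζ] at ht; exact ht
    have hζt : ζ * |t| ≤ 1 := by rw [mul_comm]; exact hζt'.le
    have hmain := mgf_single' P ζ σ (Y 1) (hmeas 1) (hbdd 1) (hmean 1) (hvar 1) t hζt
    rw [hX1]
    refine hmain.trans (Real.exp_le_exp.mpr ?_)
    rw [mul_one, mul_one]
    have hD : (0:ℝ) < 1 - ζ * |t| := by nlinarith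
    rw [le_div_iff₀ hD]
    have hx : (0:ℝ) ≤ t ^ 2 * σ ^ 2 := by positivity
    have hd0 : (0:ℝ) ≤ ζ * |t| := by positivity
    nlinarith
  | succ k IH =>
    intro t ht
    have hl0 : 0 < stepSize γ (k+1) := stepSize_pos hγ1 (k+1)
    have hl1 : stepSize γ (k+1) ≤ 1 := stepSize_le_one hγ1 (k+1)
    have hm0 : 0 < stepSize γ k := stepSize_pos hγ1 k
    have hkey : stepSize γ k * (1 - stepSize γ (k+1)) ≤ stepSize γ (k+1) :=
      stepSize_key hγ0 hγ1 k
    have hd : ζ * stepSize γ (k+1) * |t| < 1 := by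
      rw [lt_div_iff₀ (by positivity)] at ht; nlinarith
    have hd0 : (0:ℝ) ≤ ζ * stepSize γ (k+1) * |t| := by positivity
    have hD : (0:ℝ) < 1 - ζ * stepSize γ (k+1) * |t| := by linarith
    -- split the integral using independence
    have hsplit : ∫ ω, Real.exp (t * X (k+1+1) ω) ∂P
        = (∫ ω, Real.exp ((t * (1 - stepSize γ (k+1))) * X (k+1) ω) ∂P)
          * ∫ ω, Real.exp ((t * stepSize γ (k+1)) * Y (k+2) ω) ∂P := by
      have hindexp : ProbabilityTheory.IndepFun
          (fun ω => Real.exp ((t * (1 - stepSize γ (k+1))) * X (k+1) ω))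
          (fun ω => Real.exp ((t * stepSize γ (k+1)) * Y (k+2) ω)) P :=
        (hind (k+1)).comp ((measurable_id.const_mul _).exp) ((measurable_id.const_mul _).exp)
      have hint1 : Integrable (fun ω => Real.exp ((t * (1 - stepSize γ (k+1))) * X (k+1) ω)) P :=
        integrable_exp_mul' P (hXm (k+1)) ζ (hXbdd (k+1)) _
      have hint2 : Integrable (fun ω => Real.exp ((t * stepSize γ (k+1)) * Y (k+2) ω)) P :=
        integrable_exp_mul' P (hmeas (k+2)) ζ (hbdd (k+2)) _
      rw [← hindexp.integral_mul_eq_mul_integral hint1.aestronglyMeasurable hint2.aestronglyMeasurable]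
      refine integral_congr_ae (Filter.Eventually.of_forall fun ω => ?_)
      simp only [hX (k+1), Pi.mul_apply, ← Real.exp_add]
      congr 1; ring
    rw [hsplit]
    -- bound the first factor via the induction hypothesis
    have habs : |t * (1 - stepSize γ (k+1))| = |t| * (1 - stepSize γ (k+1)) := by
      rw [abs_mul, abs_of_nonneg (by linarith : (0:ℝ) ≤ 1 - stepSize γ (k+1))]
    have ht' : |t * (1 - stepSize γ (k+1))| < 1 / (ζ * stepSize γ k) := by
      rw [habs, lt_div_iff₀ (by positivity)]
      nlinarith [abs_nonneg t]
    have hF1 := IH (t * (1 - stepSize γ (k+1))) ht'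
    -- bound the second factor
    have hF2bd : ζ * |t * stepSize γ (k+1)| ≤ 1 := by
      rw [abs_mul, abs_of_nonneg hl0.le]
      nlinarith
    have hF2 := mgf_single' P ζ σ (Y (k+2)) (hmeas (k+2)) (hbdd (k+2)) (hmean (k+2))
      (hvar (k+2)) (t * stepSize γ (k+1)) hF2bd
    have hI2nonneg : 0 ≤ ∫ ω, Real.exp ((t * stepSize γ (k+1)) * Y (k+2) ω) ∂P :=
      integral_nonneg fun ω => (exp_pos _).le
    have hI1nonneg : 0 ≤ ∫ ω, Real.exp ((t * (1 - stepSize γ (k+1))) * X (k+1) ω) ∂P :=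
      integral_nonneg fun ω => (exp_pos _).le
    refine (mul_le_mul hF1 hF2 hI2nonneg (exp_pos _).le).trans ?_
    rw [← Real.exp_add]
    apply Real.exp_le_exp.mpr
    -- final arithmetic
    rw [habs]
    have hD'pos : (0:ℝ) < 1 - ζ * stepSize γ k * (|t| * (1 - stepSize γ (k+1))) := by
      nlinarith [abs_nonneg t]
    have hDD' : 1 - ζ * stepSize γ (k+1) * |t|
        ≤ 1 - ζ * stepSize γ k * (|t| * (1 - stepSize γ (k+1))) := by
      nlinarith [abs_nonneg t]
    have h1 : (t * (1 - stepSize γ (k+1))) ^ 2 * σ ^ 2 * stepSize γ k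
          / (1 - ζ * stepSize γ k * (|t| * (1 - stepSize γ (k+1))))
        ≤ t ^ 2 * σ ^ 2 * (stepSize γ (k+1) * (1 - stepSize γ (k+1)))
          / (1 - ζ * stepSize γ (k+1) * |t|) := by
      have hone : (0:ℝ) ≤ 1 - stepSize γ (k+1) := by linarith
      refine div_le_div₀ (mul_nonneg (by positivity) (mul_nonneg hl0.le hone)) ?_ hD hDD'
      have hmul := mul_le_mul_of_nonneg_left hkey
        (show (0:ℝ) ≤ t ^ 2 * σ ^ 2 * (1 - stepSize γ (k+1)) from
          mul_nonneg (by positivity) hone)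
      nlinarith [hmul]
    have h2 : (3/4) * (t * stepSize γ (k+1)) ^ 2 * σ ^ 2
        ≤ t ^ 2 * σ ^ 2 * (stepSize γ (k+1) * stepSize γ (k+1))
          / (1 - ζ * stepSize γ (k+1) * |t|) := by
      have hx : (0:ℝ) ≤ (t * stepSize γ (k+1)) ^ 2 * σ ^ 2 := by positivity
      have hxd : (0:ℝ) ≤ ((t * stepSize γ (k+1)) ^ 2 * σ ^ 2)
          * (ζ * stepSize γ (k+1) * |t|) := mul_nonneg hx hd0
      rw [le_div_iff₀ hD]
      calc (3/4) * (t * stepSize γ (k+1)) ^ 2 * σ ^ 2 * (1 - ζ * stepSize γ (k+1) * |t|)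
          = (3/4) * ((t * stepSize γ (k+1)) ^ 2 * σ ^ 2)
            - (3/4) * (((t * stepSize γ (k+1)) ^ 2 * σ ^ 2)
              * (ζ * stepSize γ (k+1) * |t|)) := by ring
        _ ≤ (t * stepSize γ (k+1)) ^ 2 * σ ^ 2 := by linarith
        _ = t ^ 2 * σ ^ 2 * (stepSize γ (k+1) * stepSize γ (k+1)) := by ring
    refine (add_le_add h1 h2).trans ?_
    rw [← add_div]
    apply le_of_eq
    congr 1
    ring
end

section
/- Let {L_k : k ≥ 2} be monotonic γ-quasi-contractions on ℝ^d (with sup norm) with common center q′, let H_k(q) = L_k(q) - L_k(q′), let λ_k = 1/(1 + (1-γ)k), and consider the recursion q_{k+1} - q′ = (1-λ_k)(q_k - q′) + λ_k [H_{k+1}(q_k) + w_{k+1}] for arbitrary vectors w_{k+1}. Then for all k ≥ 1, ‖q_{k+1} - q′‖_∞ ≤ λ_k [ ‖q_1 - q′‖_∞/λ_1 + γ ∑_{j=1}^k ‖p_j‖_∞ ] + ‖p_{k+1}‖_∞, where p_1 = 0 and p_{k+1} = (1-λ_k) p_k + λ_k w_{k+1}. -/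
open Real

/-- Pathwise error bound for stochastic-approximation iterates driven by monotonic
`γ`-quasi-contractions with common center `q'` (Wainwright). -/
theorem contraction_error_bound {ι : Type*} [Fintype ι] [Nonempty ι]
    (γ : ℝ) (hγ0 : 0 < γ) (hγ1 : γ < 1)
    (L : ℕ → (ι → ℝ) → ι → ℝ) (q' : ι → ℝ)
    (hcontr : ∀ k, 2 ≤ k → ∀ q : ι → ℝ, ‖L k q - L k q'‖ ≤ γ * ‖q - q'‖)
    (hmono : ∀ k, 2 ≤ k → ∀ q₁ q₂ : ι → ℝ, (∀ i, q₂ i ≤ q₁ i) →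
      ∀ i, L k q₂ i ≤ L k q₁ i)
    (lam : ℕ → ℝ) (hlam : ∀ k, lam k = 1 / (1 + (1 - γ) * k))
    (q w p : ℕ → ι → ℝ)
    (hq : ∀ k, 1 ≤ k → q (k + 1) = fun i =>
      q' i + (1 - lam k) * (q k i - q' i) +
        lam k * ((L (k + 1) (q k) i - L (k + 1) q' i) + w (k + 1) i))
    (hp1 : p 1 = 0)
    (hp : ∀ k, 1 ≤ k → p (k + 1) = fun i => (1 - lam k) * p k i + lam k * w (k + 1) i) :
    ∀ k, 1 ≤ k →
      ‖q (k + 1) - q'‖ ≤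
        lam k * (‖q 1 - q'‖ / lam 1 + γ * ∑ j ∈ Finset.Icc 1 k, ‖p j‖) +
          ‖p (k + 1)‖ := by
  have hd : ∀ k : ℕ, (0:ℝ) < 1 + (1 - γ) * k := by
    intro k
    have : (0:ℝ) ≤ (k:ℝ) := Nat.cast_nonneg k
    nlinarith
  have hlam_pos : ∀ k : ℕ, 0 < lam k := by
    intro k; rw [hlam]; exact div_pos one_pos (hd k)
  have hlam_le1 : ∀ k : ℕ, lam k ≤ 1 := by
    intro k
    rw [hlam]
    rw [div_le_one (hd k)]
    have : (0:ℝ) ≤ (k:ℝ) := Nat.cast_nonneg k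
    nlinarith
  have hcoef_nonneg : ∀ k : ℕ, 0 ≤ 1 - (1 - γ) * lam k := by
    intro k
    rw [hlam]
    have hdk := hd k
    have : (0:ℝ) ≤ (k:ℝ) := Nat.cast_nonneg k
    rw [sub_nonneg, div_eq_inv_mul, mul_one, ← div_eq_mul_inv, div_le_one hdk]
    nlinarith
  -- the key algebraic identity
  have hid : ∀ k : ℕ, (1 - (1 - γ) * lam (k + 1)) * lam k = lam (k + 1) := by
    intro k
    have d1 := hd k
    have d2 := hd (k + 1)
    rw [hlam, hlam]
    push_cast
    push_cast at d1 d2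
    field_simp
    ring
  -- one-step inequality
  have hstep : ∀ k, 1 ≤ k →
      ‖(q (k + 1) - q') - p (k + 1)‖ ≤
        (1 - (1 - γ) * lam k) * ‖(q k - q') - p k‖ + lam k * γ * ‖p k‖ := by
    intro k hk
    have heq : (q (k + 1) - q') - p (k + 1) =
        (1 - lam k) • ((q k - q') - p k) +
          (lam k) • (L (k + 1) (q k) - L (k + 1) q') := by
      rw [hq k hk, hp k hk]
      funext i
      simp only [Pi.sub_apply, Pi.add_apply, Pi.smul_apply, smul_eq_mul]
      ring
    have h1 : ‖(q (k + 1) - q') - p (k + 1)‖ ≤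
        (1 - lam k) * ‖(q k - q') - p k‖ + lam k * ‖L (k + 1) (q k) - L (k + 1) q'‖ := by
      rw [heq]
      calc ‖(1 - lam k) • ((q k - q') - p k) +
              (lam k) • (L (k + 1) (q k) - L (k + 1) q')‖
          ≤ ‖(1 - lam k) • ((q k - q') - p k)‖ +
              ‖(lam k) • (L (k + 1) (q k) - L (k + 1) q')‖ := norm_add_le _ _
        _ = (1 - lam k) * ‖(q k - q') - p k‖ +
              lam k * ‖L (k + 1) (q k) - L (k + 1) q'‖ := by
            rw [norm_smul, norm_smul, Real.norm_of_nonneg (by linarith [hlam_le1 k]),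
              Real.norm_of_nonneg (le_of_lt (hlam_pos k))]
    have h2 : ‖L (k + 1) (q k) - L (k + 1) q'‖ ≤ γ * ‖q k - q'‖ :=
      hcontr (k + 1) (by omega) (q k)
    have h3 : ‖q k - q'‖ ≤ ‖(q k - q') - p k‖ + ‖p k‖ := by
      calc ‖q k - q'‖ = ‖((q k - q') - p k) + p k‖ := by ring_nf
        _ ≤ ‖(q k - q') - p k‖ + ‖p k‖ := norm_add_le _ _
    have hl := hlam_pos k
    nlinarith [mul_le_mul_of_nonneg_left h2 hl.le,
      mul_le_mul_of_nonneg_left h3 (mul_pos hl hγ0).le,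
      norm_nonneg ((q k - q') - p k), norm_nonneg (p k)]
  -- main induction
  have main : ∀ k, 1 ≤ k →
      ‖(q (k + 1) - q') - p (k + 1)‖ ≤
        lam k * (‖q 1 - q'‖ / lam 1 + γ * ∑ j ∈ Finset.Icc 1 k, ‖p j‖) := by
    intro k hk
    induction k, hk using Nat.le_induction with
    | base =>
      have h := hstep 1 le_rfl
      rw [hp1] at h
      simp only [sub_zero, norm_zero, mul_zero, add_zero] at h
      have : lam 1 * (‖q 1 - q'‖ / lam 1 + γ * ∑ j ∈ Finset.Icc 1 1, ‖p j‖)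
          = ‖q 1 - q'‖ := by
        have h0 : lam 1 ≠ 0 := (hlam_pos 1).ne'
        simp [hp1]
        field_simp
      rw [this]
      nlinarith [norm_nonneg (q 1 - q'),
        mul_nonneg (by linarith : (0:ℝ) ≤ 1 - γ) (hlam_pos 1).le]
    | succ k hk ih =>
      have h := hstep (k + 1) (by omega)
      have hsum : ∑ j ∈ Finset.Icc 1 (k + 1), ‖p j‖
          = (∑ j ∈ Finset.Icc 1 k, ‖p j‖) + ‖p (k + 1)‖ :=
        Finset.sum_Icc_succ_top (by omega) _
      have hC : 0 ≤ ‖q 1 - q'‖ / lam 1 + γ * ∑ j ∈ Finset.Icc 1 k, ‖p j‖ := by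
        have hs : 0 ≤ ∑ j ∈ Finset.Icc 1 k, ‖p j‖ :=
          Finset.sum_nonneg fun j _ => norm_nonneg _
        exact add_nonneg (div_nonneg (norm_nonneg _) (hlam_pos 1).le)
          (mul_nonneg hγ0.le hs)
      have hmul : (1 - (1 - γ) * lam (k + 1)) * ‖(q (k + 1) - q') - p (k + 1)‖ ≤
          (1 - (1 - γ) * lam (k + 1)) *
            (lam k * (‖q 1 - q'‖ / lam 1 + γ * ∑ j ∈ Finset.Icc 1 k, ‖p j‖)) :=
        mul_le_mul_of_nonneg_left ih (hcoef_nonneg (k + 1))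
      rw [← mul_assoc, hid k] at hmul
      rw [hsum]
      have := hlam_pos (k + 1)
      nlinarith [norm_nonneg (p (k + 1))]
  intro k hk
  have h := main k hk
  calc ‖q (k + 1) - q'‖ = ‖((q (k + 1) - q') - p (k + 1)) + p (k + 1)‖ := by ring_nf
    _ ≤ ‖(q (k + 1) - q') - p (k + 1)‖ + ‖p (k + 1)‖ := norm_add_le _ _
    _ ≤ lam k * (‖q 1 - q'‖ / lam 1 + γ * ∑ j ∈ Finset.Icc 1 k, ‖p j‖) + ‖p (k + 1)‖ := by
        linarith
end

section
/- The empirical distributionally robust Bellman operator T̂, defined entrywise by T̂(q)(s,a) = sup_{α≥0}{ -α log E_{r∼ν̂_{s,a}}[e^{-r/α}] - αδ } + γ sup_{β≥0}{ -β log E_{s′∼p̂_{s,a}}[e^{-v(q)(s′)/β}] - βδ }, where v(q)(s) = max_b q(s,b), is a monotonic γ-contraction on ℝ^{S×A} with the sup norm: for all q_1, q_2, ‖T̂(q_1) - T̂(q_2)‖_∞ ≤ γ‖q_1 - q_2‖_∞, and q_1 ≥ q_2 entrywise implies T̂(q_1) ≥ T̂(q_2) entrywise. -/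
open Real

/-- `sup_{α ≥ 0}` of the KL dual functional. -/
noncomputable def dualSup {Y : Type*} [Fintype Y] (ν u : Y → ℝ) (δ : ℝ) : ℝ :=
  sSup ((fun α => fdual ν u δ α) '' Set.Ici 0)

/-- The value function `v(q)(s) = max_b q(s,b)` induced by a `q`-function. -/
noncomputable def vmax {S A : Type*} [Fintype A] [Nonempty A]
    (q : S × A → ℝ) (s : S) : ℝ := ⨆ b : A, q (s, b)

/-- The (empirical) distributionally robust Bellman operator in dual form. -/
noncomputable def drBellman {S A R : Type*} [Fintype S] [Fintype A] [Fintype R]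
    [Nonempty A] (ν : S → A → R → ℝ) (r : R → ℝ) (p : S → A → S → ℝ)
    (γ δ : ℝ) (q : S × A → ℝ) : S × A → ℝ :=
  fun sa => dualSup (ν sa.1 sa.2) r δ + γ * dualSup (p sa.1 sa.2) (vmax q) δ

section Aux

variable {Y : Type*} [Fintype Y]

lemma aux_exists_ne (ν : Y → ℝ) (h1 : ∑ y, ν y = 1) : ∃ y, ν y ≠ 0 := by
  by_contra h
  push_neg at h
  simp [h] at h1

lemma aux_sum_pos (ν : Y → ℝ) (hν0 : ∀ y, 0 ≤ ν y) (h1 : ∑ y, ν y = 1)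
    (g : Y → ℝ) (hg : ∀ y, 0 < g y) : 0 < ∑ y, ν y * g y := by
  obtain ⟨y0, hy0⟩ := aux_exists_ne ν h1
  refine Finset.sum_pos' (fun y _ => mul_nonneg (hν0 y) (hg y).le)
    ⟨y0, Finset.mem_univ _, mul_pos ((hν0 y0).lt_of_ne (Ne.symm hy0)) (hg y0)⟩

lemma aux_fdual_le (ν u u' : Y → ℝ) (δ c α : ℝ) (hν0 : ∀ y, 0 ≤ ν y)
    (h1 : ∑ y, ν y = 1) (hα : 0 ≤ α) (h : ∀ y, u y ≤ u' y + c) :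
    fdual ν u δ α ≤ fdual ν u' δ α + c := by
  obtain ⟨y0, hy0⟩ := aux_exists_ne ν h1
  rcases hα.eq_or_lt with heq | hpos
  · -- α = 0
    subst heq
    simp only [fdual, eq_self_iff_true, if_true]
    rw [← sub_le_iff_le_add]
    apply le_csInf (Set.Nonempty.image u' ⟨y0, hy0⟩)
    rintro _ ⟨y, hy, rfl⟩
    have h1' : sInf (u '' {y | ν y ≠ 0}) ≤ u y :=
      csInf_le ((Set.toFinite _).bddBelow) ⟨y, hy, rfl⟩
    linarith [h y]
  · -- α > 0
    simp only [fdual, if_neg hpos.ne']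
    set S' := ∑ y, ν y * Real.exp (-u' y / α) with hS'def
    set Su := ∑ y, ν y * Real.exp (-u y / α) with hSudef
    have hS' : 0 < S' := aux_sum_pos ν hν0 h1 _ (fun y => Real.exp_pos _)
    have hSu : 0 < Su := aux_sum_pos ν hν0 h1 _ (fun y => Real.exp_pos _)
    have hstep : Real.exp (-c / α) * S' ≤ Su := by
      rw [hS'def, hSudef, Finset.mul_sum]
      apply Finset.sum_le_sum
      intro y _
      have he : Real.exp (-c / α) * (ν y * Real.exp (-u' y / α))
          = ν y * Real.exp (-u' y / α + -c / α) := by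
        rw [Real.exp_add]; ring
      rw [he]
      apply mul_le_mul_of_nonneg_left _ (hν0 y)
      apply Real.exp_le_exp.2
      rw [show -u' y / α + -c / α = (-(u' y + c)) / α by ring]
      exact (div_le_div_iff_of_pos_right hpos).2 (by linarith [h y])
    have hlog : -c / α + Real.log S' ≤ Real.log Su := by
      have := Real.log_le_log (mul_pos (Real.exp_pos _) hS') hstep
      rwa [Real.log_mul (Real.exp_ne_zero _) hS'.ne', Real.log_exp] at this
    have hmul := mul_le_mul_of_nonneg_left hlog hα
    have hc : α * (-c / α) = -c := by
      rw [mul_comm, div_mul_cancel₀ _ hpos.ne']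
    nlinarith [hmul]

lemma aux_fdual_bddAbove (ν u : Y → ℝ) (δ : ℝ) (hν0 : ∀ y, 0 ≤ ν y)
    (h1 : ∑ y, ν y = 1) (hδ : 0 ≤ δ) :
    BddAbove ((fun α => fdual ν u δ α) '' Set.Ici 0) := by
  obtain ⟨y0, hy0⟩ := aux_exists_ne ν h1
  have : Nonempty Y := ⟨y0⟩
  set M := Finset.univ.sup' Finset.univ_nonempty u with hM
  have hMle : ∀ y, u y ≤ M := fun y => Finset.le_sup' u (Finset.mem_univ y)
  refine ⟨M, ?_⟩
  rintro _ ⟨α, hα, rfl⟩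
  rcases (Set.mem_Ici.1 hα).eq_or_lt with heq | hpos
  · subst heq
    simp only [fdual, if_pos rfl]
    exact le_trans (csInf_le ((Set.toFinite _).bddBelow) ⟨y0, hy0, rfl⟩) (hMle y0)
  · simp only [fdual, if_neg hpos.ne']
    set Su := ∑ y, ν y * Real.exp (-u y / α) with hSudef
    have hstep : Real.exp (-M / α) ≤ Su := by
      calc Real.exp (-M / α) = ∑ y, ν y * Real.exp (-M / α) := by
            rw [← Finset.sum_mul, h1, one_mul]
        _ ≤ Su := by
            apply Finset.sum_le_sum
            intro y _
            exact mul_le_mul_of_nonneg_left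
              (Real.exp_le_exp.2 ((div_le_div_iff_of_pos_right hpos).2 (by linarith [hMle y])))
              (hν0 y)
    have hlog : -M / α ≤ Real.log Su := by
      have := Real.log_le_log (Real.exp_pos _) hstep
      rwa [Real.log_exp] at this
    have hmul := mul_le_mul_of_nonneg_left hlog hpos.le
    have hc : α * (-M / α) = -M := by
      rw [mul_comm, div_mul_cancel₀ _ hpos.ne']
    nlinarith [mul_nonneg hpos.le hδ]

lemma aux_dualSup_le (ν u u' : Y → ℝ) (δ c : ℝ) (hν0 : ∀ y, 0 ≤ ν y)
    (h1 : ∑ y, ν y = 1) (hδ : 0 ≤ δ) (h : ∀ y, u y ≤ u' y + c) :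
    dualSup ν u δ ≤ dualSup ν u' δ + c := by
  apply csSup_le (Set.Nonempty.image _ Set.nonempty_Ici)
  rintro _ ⟨α, hα, rfl⟩
  calc fdual ν u δ α ≤ fdual ν u' δ α + c :=
        aux_fdual_le ν u u' δ c α hν0 h1 hα h
    _ ≤ dualSup ν u' δ + c := by
        exact add_le_add_left
          (le_csSup (aux_fdual_bddAbove ν u' δ hν0 h1 hδ) ⟨α, hα, rfl⟩) c

lemma aux_vmax_le {S A : Type*} [Fintype A] [Nonempty A] (q₁ q₂ : S × A → ℝ)
    (c : ℝ) (h : ∀ x, q₁ x ≤ q₂ x + c) (s : S) : vmax q₁ s ≤ vmax q₂ s + c := by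
  simp only [vmax]
  apply ciSup_le
  intro b
  have h2 : q₂ (s, b) ≤ ⨆ b, q₂ (s, b) :=
    le_ciSup (f := fun b => q₂ (s, b)) (Set.Finite.bddAbove (Set.finite_range _)) b
  linarith [h (s, b)]

end Aux

/-- The empirical distributionally robust Bellman operator is a monotonic
`γ`-contraction in the sup norm. -/
theorem drBellman_monotone_contraction {S A R : Type*}
    [Fintype S] [Fintype A] [Fintype R] [Nonempty S] [Nonempty A] [Nonempty R]
    (ν : S → A → R → ℝ) (r : R → ℝ) (p : S → A → S → ℝ)
    (γ δ : ℝ) (hγ0 : 0 < γ) (hγ1 : γ < 1) (hδ : 0 < δ)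
    (hr : ∀ i, 0 ≤ r i)
    (hν0 : ∀ s a i, 0 ≤ ν s a i) (hν1 : ∀ s a, ∑ i, ν s a i = 1)
    (hp0 : ∀ s a s', 0 ≤ p s a s') (hp1 : ∀ s a, ∑ s', p s a s' = 1) :
    (∀ q₁ q₂ : S × A → ℝ,
      ‖drBellman ν r p γ δ q₁ - drBellman ν r p γ δ q₂‖ ≤ γ * ‖q₁ - q₂‖) ∧
    (∀ q₁ q₂ : S × A → ℝ, (∀ x, q₂ x ≤ q₁ x) →
      ∀ x, drBellman ν r p γ δ q₂ x ≤ drBellman ν r p γ δ q₁ x) := by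
  constructor
  · intro q₁ q₂
    set c := ‖q₁ - q₂‖ with hc
    have hc0 : 0 ≤ c := norm_nonneg _
    have hbound : ∀ x : S × A, |q₁ x - q₂ x| ≤ c := by
      intro x
      have := norm_le_pi_norm (q₁ - q₂) x
      simpa [Real.norm_eq_abs] using this
    have h12 : ∀ x, q₁ x ≤ q₂ x + c := fun x => by linarith [(abs_le.1 (hbound x)).2]
    have h21 : ∀ x, q₂ x ≤ q₁ x + c := fun x => by linarith [(abs_le.1 (hbound x)).1]
    rw [pi_norm_le_iff_of_nonneg (mul_nonneg hγ0.le hc0)]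
    intro x
    have hD12 : dualSup (p x.1 x.2) (vmax q₁) δ ≤ dualSup (p x.1 x.2) (vmax q₂) δ + c :=
      aux_dualSup_le _ _ _ δ c (hp0 x.1 x.2) (hp1 x.1 x.2) hδ.le (aux_vmax_le q₁ q₂ c h12)
    have hD21 : dualSup (p x.1 x.2) (vmax q₂) δ ≤ dualSup (p x.1 x.2) (vmax q₁) δ + c :=
      aux_dualSup_le _ _ _ δ c (hp0 x.1 x.2) (hp1 x.1 x.2) hδ.le (aux_vmax_le q₂ q₁ c h21)
    simp only [Pi.sub_apply, drBellman, Real.norm_eq_abs]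
    rw [show dualSup (ν x.1 x.2) r δ + γ * dualSup (p x.1 x.2) (vmax q₁) δ -
        (dualSup (ν x.1 x.2) r δ + γ * dualSup (p x.1 x.2) (vmax q₂) δ) =
        γ * (dualSup (p x.1 x.2) (vmax q₁) δ - dualSup (p x.1 x.2) (vmax q₂) δ) by ring]
    rw [abs_mul, abs_of_pos hγ0]
    apply mul_le_mul_of_nonneg_left _ hγ0.le
    rw [abs_le]
    constructor <;> linarith
  · intro q₁ q₂ h x
    simp only [drBellman]
    have hvm : ∀ s, vmax q₂ s ≤ vmax q₁ s + 0 :=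
      aux_vmax_le q₂ q₁ 0 (fun y => by linarith [h y])
    have := aux_dualSup_le (p x.1 x.2) (vmax q₂) (vmax q₁) δ 0
      (hp0 x.1 x.2) (hp1 x.1 x.2) hδ.le hvm
    have h' : dualSup (p x.1 x.2) (vmax q₂) δ ≤ dualSup (p x.1 x.2) (vmax q₁) δ := by
      linarith
    nlinarith
end

section
/- Let μ_n be the empirical measure of n i.i.d. samples from μ on a finite set Y, let u : Y → ℝ, and let p_∧(μ) be the minimal positive mass of μ. Set p = p_∧(μ)/2 and let Ω_{n,p} = {sup_y |μ_n(y) - μ(y)| ≤ p}. Then E[ sup_{α ≥ 0} | f(μ_n, u, α) - f(μ, u, α) |² ] ≤ 13 · span_μ(u)² · log(e|Y|) / (p² n), where f(ν,u,α) = -α log ν[e^{-u/α}] - αδ and span_μ(u) = inf_κ ‖u - κ‖_{L^∞(μ)}. -/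
open MeasureTheory Real

open Finset

section analytic
set_option linter.unusedSectionVars false
variable {Y : Type*} [Fintype Y] [Nonempty Y]

lemma abs_le_linf (m u : Y → ℝ) {y : Y} (hy : m y ≠ 0) : |u y| ≤ linfNorm m u :=
  le_csSup ((Set.toFinite _).image _).bddAbove ⟨y, hy, rfl⟩

lemma exists_ne_zero {m : Y → ℝ} (h1 : ∑ y, m y = 1) : ∃ y, m y ≠ 0 := by
  by_contra h
  push_neg at h
  simp [h] at h1

lemma linf_nonneg {m : Y → ℝ} (u : Y → ℝ) (h1 : ∑ y, m y = 1) : 0 ≤ linfNorm m u := by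
  obtain ⟨y, hy⟩ := exists_ne_zero h1
  exact le_trans (abs_nonneg (u y)) (abs_le_linf m u hy)

lemma S_bounds (u ρ : Y → ℝ) (α κ c : ℝ) (hα : 0 < α)
    (hρ0 : ∀ y, 0 ≤ ρ y) (hρ1 : ∑ y, ρ y = 1)
    (hρc : ∀ y, ρ y ≠ 0 → |u y - κ| ≤ c) :
    Real.exp ((-κ - c) / α) ≤ ∑ y, ρ y * Real.exp (-u y / α) ∧
      ∑ y, ρ y * Real.exp (-u y / α) ≤ Real.exp ((c - κ) / α) := by
  constructor
  · calc Real.exp ((-κ - c)/α) = ∑ y, ρ y * Real.exp ((-κ - c)/α) := by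
          rw [← Finset.sum_mul, hρ1, one_mul]
    _ ≤ ∑ y, ρ y * Real.exp (-u y / α) := by
          apply Finset.sum_le_sum
          intro y _
          rcases eq_or_ne (ρ y) 0 with h | h
          · simp [h]
          · have hu := abs_le.1 (hρc y h)
            have h2 : (-κ - c)/α ≤ -u y/α := by gcongr; linarith
            exact mul_le_mul_of_nonneg_left (Real.exp_le_exp.2 h2) (hρ0 y)
  · calc ∑ y, ρ y * Real.exp (-u y / α) ≤ ∑ y, ρ y * Real.exp ((c - κ)/α) := by
          apply Finset.sum_le_sum
          intro y _
          rcases eq_or_ne (ρ y) 0 with h | h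
          · simp [h]
          · have hu := abs_le.1 (hρc y h)
            have h2 : -u y/α ≤ (c - κ)/α := by gcongr; linarith
            exact mul_le_mul_of_nonneg_left (Real.exp_le_exp.2 h2) (hρ0 y)
    _ = Real.exp ((c - κ)/α) := by rw [← Finset.sum_mul, hρ1, one_mul]

lemma S_pos (u ρ : Y → ℝ) (α κ c : ℝ) (hα : 0 < α)
    (hρ0 : ∀ y, 0 ≤ ρ y) (hρ1 : ∑ y, ρ y = 1)
    (hρc : ∀ y, ρ y ≠ 0 → |u y - κ| ≤ c) :
    0 < ∑ y, ρ y * Real.exp (-u y / α) :=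
  lt_of_lt_of_le (Real.exp_pos _) (S_bounds u ρ α κ c hα hρ0 hρ1 hρc).1

lemma core_log_diff (u ρ σ : Y → ℝ) (α κ c q : ℝ) (hα : 0 < α) (hq : 0 ≤ q) (hc : 0 ≤ c)
    (hρ0 : ∀ y, 0 ≤ ρ y) (hρ1 : ∑ y, ρ y = 1) (hσ1 : ∑ y, σ y = 1)
    (hρc : ∀ y, ρ y ≠ 0 → |u y - κ| ≤ c)
    (hkey : ∀ y, |σ y - ρ y| ≤ q * ρ y)
    (hS : ∑ y, ρ y * Real.exp (-u y / α) ≤ ∑ y, σ y * Real.exp (-u y / α)) :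
    α * (Real.log (∑ y, σ y * Real.exp (-u y / α)) -
      Real.log (∑ y, ρ y * Real.exp (-u y / α))) ≤ 4 * c * q := by
  set E : Y → ℝ := fun y => Real.exp (-u y / α) with hE
  set Sρ : ℝ := ∑ y, ρ y * E y with hSρ
  set Sσ : ℝ := ∑ y, σ y * E y with hSσ
  have hSρpos : 0 < Sρ := S_pos u ρ α κ c hα hρ0 hρ1 hρc
  have hSσpos : 0 < Sσ := lt_of_lt_of_le hSρpos hS
  have hlogS : Real.log Sρ ≤ (c - κ) / α :=
    (Real.log_le_iff_le_exp hSρpos).2 (S_bounds u ρ α κ c hα hρ0 hρ1 hρc).2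
  -- termwise bound on ρ y * max 0 (Sρ - E y)
  have hterm : ∀ y, ρ y * max 0 (Sρ - E y) ≤ ρ y * (Sρ * (2 * c / α)) := by
    intro y
    rcases eq_or_ne (ρ y) 0 with h | h
    · simp [h]
    apply mul_le_mul_of_nonneg_left _ (hρ0 y)
    rcases le_total Sρ (E y) with h1 | h1
    · rw [max_eq_left (by linarith)]
      positivity
    · rw [max_eq_right (by linarith)]
      have hEpos : 0 < E y := Real.exp_pos _
      have hexp := Real.add_one_le_exp (Real.log (E y) - Real.log Sρ)
      have hEeq : Sρ * Real.exp (Real.log (E y) - Real.log Sρ) = E y := by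
        rw [Real.exp_sub, Real.exp_log hEpos, Real.exp_log hSρpos]
        field_simp
      have h2 : Sρ - E y ≤ Sρ * (Real.log Sρ - Real.log (E y)) := by
        nlinarith [mul_le_mul_of_nonneg_left hexp hSρpos.le]
      have hu := abs_le.1 (hρc y h)
      have hlogE : Real.log (E y) = -u y / α := by rw [hE]; exact Real.log_exp _
      have h3 : Real.log Sρ - Real.log (E y) ≤ 2 * c / α := by
        rw [hlogE]
        have h4 : -((κ + c) / α) ≤ -u y / α := by
          rw [neg_div]
          apply neg_le_neg
          gcongr
          linarith
        have : (c - κ)/α + (κ + c)/α = 2 * c / α := by ring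
        linarith
      calc Sρ - E y ≤ Sρ * (Real.log Sρ - Real.log (E y)) := h2
        _ ≤ Sρ * (2 * c / α) := mul_le_mul_of_nonneg_left h3 hSρpos.le
  -- |E y - Sρ| decomposition
  have habs : ∀ y, ρ y * |E y - Sρ| = ρ y * (E y - Sρ) + 2 * (ρ y * max 0 (Sρ - E y)) := by
    intro y
    rcases le_total (E y) Sρ with h1 | h1
    · rw [abs_of_nonpos (by linarith), max_eq_right (by linarith)]; ring
    · rw [abs_of_nonneg (by linarith), max_eq_left (by linarith)]; ring
  have hsum0 : ∑ y, ρ y * (E y - Sρ) = 0 := by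
    simp only [mul_sub]
    rw [Finset.sum_sub_distrib, ← Finset.sum_mul, hρ1, one_mul]
    exact sub_self _
  have hsumabs : ∑ y, ρ y * |E y - Sρ| ≤ 2 * (Sρ * (2 * c / α)) := by
    calc ∑ y, ρ y * |E y - Sρ|
        = ∑ y, (ρ y * (E y - Sρ) + 2 * (ρ y * max 0 (Sρ - E y))) :=
          Finset.sum_congr rfl fun y _ => habs y
      _ = 2 * ∑ y, ρ y * max 0 (Sρ - E y) := by
          rw [Finset.sum_add_distrib, hsum0, ← Finset.mul_sum]; ring
      _ ≤ 2 * ∑ y, ρ y * (Sρ * (2 * c / α)) := by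
          apply mul_le_mul_of_nonneg_left (Finset.sum_le_sum fun y _ => hterm y) (by norm_num)
      _ = 2 * (Sρ * (2 * c / α)) := by rw [← Finset.sum_mul, hρ1, one_mul]
  have hdiff : Sσ - Sρ = ∑ y, (σ y - ρ y) * (E y - Sρ) := by
    simp only [sub_mul, mul_sub]
    rw [Finset.sum_sub_distrib, Finset.sum_sub_distrib, Finset.sum_sub_distrib,
      ← Finset.sum_mul, ← Finset.sum_mul, hρ1, hσ1]
    simp [hSρ, hSσ]
  have hdiffle : Sσ - Sρ ≤ q * (2 * (Sρ * (2 * c / α))) := by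
    rw [hdiff]
    calc ∑ y, (σ y - ρ y) * (E y - Sρ)
        ≤ ∑ y, q * (ρ y * |E y - Sρ|) := by
          apply Finset.sum_le_sum
          intro y _
          calc (σ y - ρ y) * (E y - Sρ) ≤ |(σ y - ρ y) * (E y - Sρ)| := le_abs_self _
            _ = |σ y - ρ y| * |E y - Sρ| := abs_mul _ _
            _ ≤ (q * ρ y) * |E y - Sρ| :=
                mul_le_mul_of_nonneg_right (hkey y) (abs_nonneg _)
            _ = q * (ρ y * |E y - Sρ|) := by ring
      _ = q * ∑ y, ρ y * |E y - Sρ| := by rw [← Finset.mul_sum]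
      _ ≤ q * (2 * (Sρ * (2 * c / α))) := mul_le_mul_of_nonneg_left hsumabs hq
  have hlogdiff : Real.log Sσ - Real.log Sρ ≤ (Sσ - Sρ) / Sρ := by
    have h5 := Real.log_le_sub_one_of_pos (div_pos hSσpos hSρpos)
    rw [Real.log_div hSσpos.ne' hSρpos.ne'] at h5
    have : (Sσ - Sρ) / Sρ = Sσ / Sρ - 1 := by
      rw [sub_div, div_self hSρpos.ne']
    linarith
  calc α * (Real.log Sσ - Real.log Sρ) ≤ α * ((Sσ - Sρ) / Sρ) :=
        mul_le_mul_of_nonneg_left hlogdiff hα.le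
    _ ≤ α * ((q * (2 * (Sρ * (2 * c / α)))) / Sρ) := by
        apply mul_le_mul_of_nonneg_left _ hα.le
        gcongr
    _ = 4 * c * q := by field_simp; ring

lemma sInf_mem_interval (u ρ : Y → ℝ) (κ c : ℝ) (hρ1 : ∑ y, ρ y = 1)
    (hρc : ∀ y, ρ y ≠ 0 → |u y - κ| ≤ c) :
    κ - c ≤ sInf (u '' {y | ρ y ≠ 0}) ∧ sInf (u '' {y | ρ y ≠ 0}) ≤ κ + c := by
  obtain ⟨y₀, hy₀⟩ := exists_ne_zero hρ1
  have hne : (u '' {y | ρ y ≠ 0}).Nonempty := ⟨u y₀, y₀, hy₀, rfl⟩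
  constructor
  · apply le_csInf hne
    rintro x ⟨y, hy, rfl⟩
    have := abs_le.1 (hρc y hy)
    linarith [this.1]
  · refine le_trans (csInf_le ((Set.toFinite _).image _).bddBelow ⟨y₀, hy₀, rfl⟩) ?_
    have := abs_le.1 (hρc y₀ hy₀)
    linarith [this.2]

lemma fdual_crude (m ν u : Y → ℝ) (δ κ : ℝ) {α : ℝ} (hα : 0 ≤ α)
    (hm0 : ∀ y, 0 ≤ m y) (hm1 : ∑ y, m y = 1)
    (hν0 : ∀ y, 0 ≤ ν y) (hν1 : ∑ y, ν y = 1)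
    (hsupp : ∀ y, ν y ≠ 0 → m y ≠ 0) :
    |fdual ν u δ α - fdual m u δ α| ≤ 2 * linfNorm m (fun y => u y - κ) := by
  set c := linfNorm m (fun y => u y - κ) with hc
  have hmc : ∀ y, m y ≠ 0 → |u y - κ| ≤ c := fun y hy => abs_le_linf m (fun y => u y - κ) hy
  have hνc : ∀ y, ν y ≠ 0 → |u y - κ| ≤ c := fun y hy => hmc y (hsupp y hy)
  rcases eq_or_lt_of_le hα with h0 | hαpos
  · rw [fdual, fdual, if_pos h0.symm, if_pos h0.symm]
    have h1 := sInf_mem_interval u ν κ c hν1 hνc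
    have h2 := sInf_mem_interval u m κ c hm1 hmc
    rw [abs_le]
    constructor <;> linarith [h1.1, h1.2, h2.1, h2.2]
  · rw [fdual, fdual, if_neg (ne_of_gt hαpos), if_neg (ne_of_gt hαpos)]
    have hbν := S_bounds u ν α κ c hαpos hν0 hν1 hνc
    have hbm := S_bounds u m α κ c hαpos hm0 hm1 hmc
    have hpν := S_pos u ν α κ c hαpos hν0 hν1 hνc
    have hpm := S_pos u m α κ c hαpos hm0 hm1 hmc
    have e1 : Real.log (∑ y, ν y * Real.exp (-u y / α)) ≤ (c - κ)/α :=
      (Real.log_le_iff_le_exp hpν).2 hbν.2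
    have e2 : (-κ - c)/α ≤ Real.log (∑ y, ν y * Real.exp (-u y / α)) :=
      (Real.le_log_iff_exp_le hpν).2 hbν.1
    have e3 : Real.log (∑ y, m y * Real.exp (-u y / α)) ≤ (c - κ)/α :=
      (Real.log_le_iff_le_exp hpm).2 hbm.2
    have e4 : (-κ - c)/α ≤ Real.log (∑ y, m y * Real.exp (-u y / α)) :=
      (Real.le_log_iff_exp_le hpm).2 hbm.1
    have key : ∀ x y : ℝ, (-κ - c)/α ≤ x → y ≤ (c - κ)/α →
        (-α * x - α * δ) - (-α * y - α * δ) ≤ 2 * c := by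
      intro x y hx hy
      have h5 : y - x ≤ 2*c/α := by
        have : (c - κ)/α - (-κ - c)/α = 2*c/α := by ring
        linarith
      have h6 : α * (2*c/α) = 2*c := by field_simp
      nlinarith [mul_le_mul_of_nonneg_left h5 hα]
    rw [abs_le]
    constructor
    · have := key _ _ e4 e1
      linarith
    · have := key _ _ e2 e3
      linarith

lemma fdual_fine (m ν u : Y → ℝ) (δ κ p b : ℝ) (hp : 0 < p) {α : ℝ} (hα : 0 ≤ α)
    (hm0 : ∀ y, 0 ≤ m y) (hm1 : ∑ y, m y = 1)
    (hν0 : ∀ y, 0 ≤ ν y) (hν1 : ∑ y, ν y = 1)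
    (hsupp : ∀ y, ν y ≠ 0 → m y ≠ 0)
    (hmp : ∀ y, m y ≠ 0 → 2 * p ≤ m y)
    (hdev : ∀ y, |ν y - m y| ≤ b) (hbp : b ≤ p) :
    |fdual ν u δ α - fdual m u δ α| ≤ 4 * linfNorm m (fun y => u y - κ) * b / p := by
  set c := linfNorm m (fun y => u y - κ) with hcdef
  have hc : 0 ≤ c := linf_nonneg _ hm1
  have hb0 : 0 ≤ b := le_trans (abs_nonneg _) (hdev (Classical.arbitrary Y))
  have hq : 0 ≤ b / p := div_nonneg hb0 hp.le
  have hmc : ∀ y, m y ≠ 0 → |u y - κ| ≤ c := fun y hy => abs_le_linf m (fun y => u y - κ) hy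
  have hνc : ∀ y, ν y ≠ 0 → |u y - κ| ≤ c := fun y hy => hmc y (hsupp y hy)
  have hνp : ∀ y, m y ≠ 0 → p ≤ ν y := by
    intro y hy
    have h1 := hmp y hy
    have h2 := abs_le.1 (hdev y)
    linarith [h2.1]
  have hsupp2 : ∀ y, m y = 0 → ν y = 0 := by
    intro y hy
    by_contra h
    exact hsupp y h hy
  have hgoal0 : (0:ℝ) ≤ 4 * c * b / p := by positivity
  rcases eq_or_lt_of_le hα with h0 | hαpos
  · rw [fdual, fdual, if_pos h0.symm, if_pos h0.symm]
    have : {y | ν y ≠ 0} = {y | m y ≠ 0} := by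
      ext y
      simp only [Set.mem_setOf_eq]
      constructor
      · exact hsupp y
      · intro hy
        have := hνp y hy
        intro h
        rw [h] at this
        linarith
    rw [this, sub_self, abs_zero]
    exact hgoal0
  · rw [fdual, fdual, if_neg (ne_of_gt hαpos), if_neg (ne_of_gt hαpos)]
    have hpν := S_pos u ν α κ c hαpos hν0 hν1 hνc
    have hpm := S_pos u m α κ c hαpos hm0 hm1 hmc
    have hqc : 4 * c * (b / p) = 4 * c * b / p := by ring
    rcases le_total (∑ y, ν y * Real.exp (-u y / α)) (∑ y, m y * Real.exp (-u y / α)) with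
      hle | hle
    · have hkey : ∀ y, |m y - ν y| ≤ (b / p) * ν y := by
        intro y
        rcases eq_or_ne (m y) 0 with hy | hy
        · rw [hy, hsupp2 y hy]
          simp
        · have h1 := hνp y hy
          have h2 : |m y - ν y| ≤ b := by
            rw [abs_sub_comm]
            exact hdev y
          calc |m y - ν y| ≤ b := h2
            _ = (b / p) * p := by field_simp
            _ ≤ (b / p) * ν y := mul_le_mul_of_nonneg_left h1 hq
      have hcore := core_log_diff u ν m α κ c (b / p) hαpos hq hc hν0 hν1 hm1 hνc hkey hle
      have heq : (-α * Real.log (∑ y, ν y * Real.exp (-u y / α)) - α * δ) -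
          (-α * Real.log (∑ y, m y * Real.exp (-u y / α)) - α * δ) =
          α * (Real.log (∑ y, m y * Real.exp (-u y / α)) -
            Real.log (∑ y, ν y * Real.exp (-u y / α))) := by ring
      rw [heq, abs_of_nonneg]
      · rw [← hqc]; exact hcore
      · exact mul_nonneg hαpos.le (by linarith [Real.log_le_log hpν hle])

    · have hkey : ∀ y, |ν y - m y| ≤ (b / p) * m y := by
        intro y
        rcases eq_or_ne (m y) 0 with hy | hy
        · rw [hy, hsupp2 y hy]
          simp
        · have h1 := hmp y hy
          calc |ν y - m y| ≤ b := hdev y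
            _ = (b / p) * p := by field_simp
            _ ≤ (b / p) * m y := mul_le_mul_of_nonneg_left (by linarith) hq
      have hcore := core_log_diff u m ν α κ c (b / p) hαpos hq hc hm0 hm1 hν1 hmc hkey hle
      have heq : (-α * Real.log (∑ y, ν y * Real.exp (-u y / α)) - α * δ) -
          (-α * Real.log (∑ y, m y * Real.exp (-u y / α)) - α * δ) =
          -(α * (Real.log (∑ y, ν y * Real.exp (-u y / α)) -
            Real.log (∑ y, m y * Real.exp (-u y / α)))) := by ring
      rw [heq, abs_neg, abs_of_nonneg]
      · rw [← hqc]; exact hcore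
      · exact mul_nonneg hαpos.le (by linarith [Real.log_le_log hpm hle])

end analytic



lemma var_bound {Ω Y : Type*} [MeasurableSpace Ω]
    [Fintype Y] [DecidableEq Y] [MeasurableSpace Y] [MeasurableSingletonClass Y]
    (P : Measure Ω) [IsProbabilityMeasure P]
    (μ : Measure Y) [IsProbabilityMeasure μ]
    {n : ℕ} (hn : 1 ≤ n) (X : Fin n → Ω → Y)
    (hmeas : ∀ i, Measurable (X i))
    (hindep : ProbabilityTheory.iIndepFun X P)
    (hlaw : ∀ i, Measure.map (X i) P = μ) (y : Y) :
    ∫ ω, ((∑ i, if X i ω = y then (1 : ℝ) else 0) / n - (μ {y}).toReal) ^ 2 ∂P ≤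
      (μ {y}).toReal / n := by
  set m : ℝ := (μ {y}).toReal with hm
  have hm0 : 0 ≤ m := ENNReal.toReal_nonneg
  set N : ℝ := (n : ℝ) with hN
  have hN1 : (1:ℝ) ≤ N := by rw [hN]; exact_mod_cast hn
  have hN0 : (0:ℝ) < N := by linarith
  set g : Y → ℝ := fun z => if z = y then (1:ℝ) else 0 with hg
  set B : Fin n → Ω → ℝ := fun i ω => if X i ω = y then (1:ℝ) else 0 with hB
  have hBg : ∀ i, B i = g ∘ X i := by
    intro i; funext ω; simp [hB, hg]
  have hBmeas : ∀ i, Measurable (B i) := by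
    intro i; rw [hBg i]; exact (measurable_of_countable g).comp (hmeas i)
  have hBind : ∀ i, B i = (X i ⁻¹' {y}).indicator (fun _ => (1:ℝ)) := by
    intro i; funext ω
    by_cases h : X i ω = y <;> simp [hB, Set.indicator_apply, Set.mem_preimage, h]
  have hBint : ∀ i, Integrable (B i) P := by
    intro i; rw [hBind i]
    exact (integrable_const (1:ℝ)).indicator (hmeas i (measurableSet_singleton y))
  have hmap : ∀ i, P (X i ⁻¹' {y}) = μ {y} := by
    intro i
    rw [← hlaw i, Measure.map_apply (hmeas i) (measurableSet_singleton y)]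
  have hIB : ∀ i, ∫ ω, B i ω ∂P = m := by
    intro i
    rw [show (fun ω => B i ω) = (X i ⁻¹' {y}).indicator (fun _ => (1:ℝ)) from hBind i,
      integral_indicator_const _ (hmeas i (measurableSet_singleton y)), measureReal_def, hmap i, smul_eq_mul,
      mul_one]
  have hBBind : ∀ i j, (fun ω => B i ω * B j ω) =
      ((X i ⁻¹' {y}) ∩ (X j ⁻¹' {y})).indicator (fun _ => (1:ℝ)) := by
    intro i j; funext ω
    simp only [hB, Set.indicator_apply, Set.mem_inter_iff, Set.mem_preimage,
      Set.mem_singleton_iff]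
    split_ifs <;> simp_all
  have hBBint : ∀ i j, Integrable (fun ω => B i ω * B j ω) P := by
    intro i j; rw [hBBind i j]
    exact (integrable_const (1:ℝ)).indicator
      ((hmeas i (measurableSet_singleton y)).inter (hmeas j (measurableSet_singleton y)))
  have hIBB : ∀ i j, i ≠ j → ∫ ω, B i ω * B j ω ∂P = m * m := by
    intro i j hij
    have hind : ProbabilityTheory.IndepFun (B i) (B j) P := by
      rw [hBg i, hBg j]
      exact (hindep.indepFun hij).comp (measurable_of_countable g) (measurable_of_countable g)
    have := hind.integral_mul_eq_mul_integral (hBint i).aestronglyMeasurable (hBint j).aestronglyMeasurable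
    calc ∫ ω, B i ω * B j ω ∂P = ∫ ω, (B i * B j) ω ∂P := rfl
      _ = (∫ ω, B i ω ∂P) * ∫ ω, B j ω ∂P := this
      _ = m * m := by rw [hIB i, hIB j]
  have hIBB2 : ∀ i, ∫ ω, B i ω * B i ω ∂P = m := by
    intro i
    have : (fun ω => B i ω * B i ω) = B i := by
      funext ω; simp only [hB]; split_ifs <;> norm_num
    rw [this, hIB i]
  have hsum : ∫ ω, (∑ i, B i ω) ∂P = N * m := by
    rw [integral_finset_sum _ fun i _ => hBint i]
    simp [hIB, Finset.sum_const, Finset.card_univ, nsmul_eq_mul, hN]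
  have hrow : ∀ i : Fin n, ∑ j, (∫ ω, B i ω * B j ω ∂P) = m + (N - 1) * (m * m) := by
    intro i
    have hterm : ∀ j : Fin n, ∫ ω, B i ω * B j ω ∂P =
        m * m + (if i = j then m - m * m else 0) := by
      intro j
      rcases eq_or_ne i j with h | h
      · subst h; rw [hIBB2 i]; simp
      · rw [hIBB i j h]; simp [h]
    rw [Finset.sum_congr rfl fun j _ => hterm j, Finset.sum_add_distrib, Finset.sum_ite_eq]
    simp [Finset.sum_const, Finset.card_univ, nsmul_eq_mul]
    ring
  have hsq : ∫ ω, (∑ i, B i ω) ^ 2 ∂P = N * (m + (N - 1) * (m * m)) := by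
    have hpt : (fun ω => (∑ i, B i ω) ^ 2) = fun ω => ∑ i, ∑ j, B i ω * B j ω := by
      funext ω; rw [sq, Finset.sum_mul_sum]
    rw [hpt, integral_finset_sum _ fun i _ => integrable_finset_sum _ fun j _ => hBBint i j]
    rw [Finset.sum_congr rfl fun i _ => by rw [integral_finset_sum _ fun j _ => hBBint i j]]
    rw [Finset.sum_congr rfl fun i _ => hrow i]
    simp only [Finset.sum_const, Finset.card_univ, Fintype.card_fin, nsmul_eq_mul]
    rfl
  have hSint : Integrable (fun ω => ∑ i, B i ω) P := integrable_finset_sum _ fun i _ => hBint i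
  have hS2int : Integrable (fun ω => (∑ i, B i ω) ^ 2) P := by
    have hpt : (fun ω => (∑ i, B i ω) ^ 2) = fun ω => ∑ i, ∑ j, B i ω * B j ω := by
      funext ω; rw [sq, Finset.sum_mul_sum]
    rw [hpt]
    exact integrable_finset_sum _ fun i _ => integrable_finset_sum _ fun j _ => hBBint i j
  have hpt2 : (fun ω => ((∑ i, B i ω) / N - m) ^ 2) =
      fun ω => (1 / N ^ 2) * (∑ i, B i ω) ^ 2 - (2 * m / N) * (∑ i, B i ω) + m ^ 2 := by
    funext ω; ring
  have i1 : Integrable (fun ω => (1 / N ^ 2) * (∑ i, B i ω) ^ 2) P := hS2int.const_mul _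
  have i2 : Integrable (fun ω => (2 * m / N) * (∑ i, B i ω)) P := hSint.const_mul _
  have hint : ∫ ω, ((∑ i, B i ω) / N - m) ^ 2 ∂P =
      (1 / N ^ 2) * (N * (m + (N - 1) * (m * m))) - (2 * m / N) * (N * m) + m ^ 2 := by
    rw [hpt2]
    calc ∫ ω, ((1 / N ^ 2) * (∑ i, B i ω) ^ 2 - (2 * m / N) * (∑ i, B i ω) + m ^ 2) ∂P
        = (∫ ω, ((1 / N ^ 2) * (∑ i, B i ω) ^ 2 - (2 * m / N) * (∑ i, B i ω)) ∂P) +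
            ∫ _ω, (m ^ 2 : ℝ) ∂P := integral_add (i1.sub i2) (integrable_const _)
      _ = ((∫ ω, (1 / N ^ 2) * (∑ i, B i ω) ^ 2 ∂P) -
            ∫ ω, (2 * m / N) * (∑ i, B i ω) ∂P) + m ^ 2 := by
          rw [integral_sub i1 i2, integral_const]
          simp
      _ = (1 / N ^ 2) * (N * (m + (N - 1) * (m * m))) - (2 * m / N) * (N * m) + m ^ 2 := by
          rw [integral_const_mul, integral_const_mul, hsq, hsum]
  have hfinal : (1 / N ^ 2) * (N * (m + (N - 1) * (m * m))) - (2 * m / N) * (N * m) + m ^ 2 =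
      m / N - m * m / N := by
    field_simp
    ring
  calc ∫ ω, ((∑ i, B i ω) / N - m) ^ 2 ∂P = m / N - m * m / N := by rw [hint, hfinal]
    _ ≤ m / N := by
        have : 0 ≤ m * m / N := by positivity
        linarith


lemma ae_supp {Ω Y : Type*} [MeasurableSpace Ω] [Fintype Y] [MeasurableSpace Y]
    [MeasurableSingletonClass Y]
    (P : Measure Ω) (μ : Measure Y) [IsFiniteMeasure μ]
    {n : ℕ} (X : Fin n → Ω → Y) (hmeas : ∀ i, Measurable (X i))
    (hlaw : ∀ i, Measure.map (X i) P = μ) :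
    ∀ᵐ ω ∂P, ∀ i, (μ {X i ω}).toReal ≠ 0 := by
  rw [ae_all_iff]
  intro i
  set S : Set Y := {y : Y | (μ {y}).toReal = 0} with hS
  have hSmeas : MeasurableSet S := (Set.to_countable _).measurableSet
  have hμS : μ S = 0 := by
    have h1 : S = ⋃ y ∈ S, {y} := (Set.biUnion_of_singleton _).symm
    rw [h1, measure_biUnion_null_iff (Set.to_countable _)]
    intro y hy
    have hne : μ {y} ≠ ⊤ := measure_ne_top μ _
    have hy' : (μ {y}).toReal = 0 := hy
    exact ((ENNReal.toReal_eq_zero_iff _).1 hy').resolve_right hne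
  have hP : P (X i ⁻¹' S) = 0 := by
    rw [← Measure.map_apply (hmeas i) hSmeas, hlaw i, hμS]
  rw [ae_iff]
  convert hP using 2
  ext ω
  simp [hS]


/-- Second-moment bound on the sup over `α ≥ 0` of the difference between the
empirical and population dual functionals, with `p = p_∧(μ)/2`:
`E[sup_α |f(μₙ,u,α) - f(μ,u,α)|²] ≤ 13 span_μ(u)² log(e|Y|)/(p²n)`. -/
theorem dual_sup_second_moment {Ω Y : Type*} [MeasurableSpace Ω]
    [Fintype Y] [Nonempty Y] [DecidableEq Y] [MeasurableSpace Y] [MeasurableSingletonClass Y]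
    (P : Measure Ω) [IsProbabilityMeasure P]
    (μ : Measure Y) [IsProbabilityMeasure μ]
    {n : ℕ} (hn : 1 ≤ n) (X : Fin n → Ω → Y)
    (hmeas : ∀ i, Measurable (X i))
    (hindep : ProbabilityTheory.iIndepFun X P)
    (hlaw : ∀ i, Measure.map (X i) P = μ)
    (u : Y → ℝ) (δ : ℝ) (hδ : 0 < δ) :
    ∫ ω, (sSup ((fun α =>
        |fdual (fun y => (∑ i, if X i ω = y then (1 : ℝ) else 0) / n) u δ α -
          fdual (fun y => (μ {y}).toReal) u δ α|) '' Set.Ici 0)) ^ 2 ∂P ≤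
      13 * spanNorm (fun y => (μ {y}).toReal) u ^ 2 *
        Real.log (Real.exp 1 * Fintype.card Y) /
          ((pmin (fun y => (μ {y}).toReal) / 2) ^ 2 * n) := by

  classical
  set m : Y → ℝ := fun y => (μ {y}).toReal with hmdef
  have hm0 : ∀ y, 0 ≤ m y := fun y => ENNReal.toReal_nonneg
  have hm1' : ∑ y, μ {y} = 1 := by
    have h := sum_measure_preimage_singleton (Finset.univ : Finset Y)
      (f := (id : Y → Y)) (μ := μ) (fun b _ => measurableSet_singleton b)
    simp only [Set.preimage_id, Finset.coe_univ] at h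
    rw [h, measure_univ]
  have hm1 : ∑ y, m y = 1 := by
    rw [hmdef]
    rw [← ENNReal.toReal_sum (fun y _ => measure_ne_top μ _)]
    rw [hm1', ENNReal.toReal_one]
  have hmle1 : ∀ y, m y ≤ 1 := by
    intro y
    rw [hmdef]
    exact ENNReal.toReal_le_of_le_ofReal one_pos.le (by simpa using prob_le_one)
  -- pmin
  have hp0pos : 0 < pmin m := by
    obtain ⟨y, hy⟩ := exists_ne_zero hm1
    have hypos : 0 < m y := lt_of_le_of_ne (hm0 y) (Ne.symm hy)
    have hmem : pmin m ∈ m '' {y | 0 < m y} :=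
      Set.Nonempty.csInf_mem ⟨m y, y, hypos, rfl⟩ (Set.toFinite _)
    obtain ⟨z, hz, hze⟩ := hmem
    rw [← hze]; exact hz
  have hp0le : ∀ y, m y ≠ 0 → pmin m ≤ m y := by
    intro y hy
    exact csInf_le (Set.toFinite _).bddBelow ⟨y, lt_of_le_of_ne (hm0 y) (Ne.symm hy), rfl⟩
  set p : ℝ := pmin m / 2 with hpdef
  have hp : 0 < p := by rw [hpdef]; linarith
  have hmp : ∀ y, m y ≠ 0 → 2 * p ≤ m y := by
    intro y hy
    have := hp0le y hy
    rw [hpdef]; linarith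
  have hN0 : (0:ℝ) < n := by exact_mod_cast hn
  have hpn : (0:ℝ) < p ^ 2 * n := by positivity
  -- empirical measure basic facts
  have hν0 : ∀ ω y, 0 ≤ (∑ i, if X i ω = y then (1:ℝ) else 0) / n := by
    intro ω y
    apply div_nonneg _ hN0.le
    apply Finset.sum_nonneg
    intro i _
    split_ifs <;> norm_num
  have hν1 : ∀ ω, ∑ y, (∑ i, if X i ω = y then (1:ℝ) else 0) / n = 1 := by
    intro ω
    rw [← Finset.sum_div, Finset.sum_comm]
    have : ∀ i : Fin n, ∑ y, (if X i ω = y then (1:ℝ) else 0) = 1 := by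
      intro i
      rw [Finset.sum_ite_eq]
      simp
    rw [Finset.sum_congr rfl fun i _ => this i]
    simp [Finset.sum_const, Finset.card_univ]
    omega
  -- integrability of squared deviations
  have hdevint : ∀ y : Y, Integrable
      (fun ω => ((∑ i, if X i ω = y then (1:ℝ) else 0) / n - m y) ^ 2) P := by
    intro y
    have hmeas' : Measurable (fun ω => ((∑ i, if X i ω = y then (1:ℝ) else 0) / n - m y) ^ 2) := by
      apply Measurable.pow_const
      apply Measurable.sub_const
      apply Measurable.div_const
      apply Finset.measurable_sum
      intro i _
      exact (measurable_of_countable (fun z => if z = y then (1:ℝ) else 0)).comp (hmeas i)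
    apply (integrable_const (1:ℝ)).mono' hmeas'.aestronglyMeasurable
    apply ae_of_all
    intro ω
    have h1 : (∑ i, if X i ω = y then (1:ℝ) else 0) / n ≤ 1 := by
      rw [div_le_one hN0]
      calc ∑ i, (if X i ω = y then (1:ℝ) else 0) ≤ ∑ _i : Fin n, (1:ℝ) := by
            apply Finset.sum_le_sum
            intro i _
            split_ifs <;> norm_num
        _ = n := by simp [Finset.sum_const, Finset.card_univ]
    have h2 := hν0 ω y
    have h3 := hm0 y
    have h4 := hmle1 y
    have habs : |(∑ i, if X i ω = y then (1:ℝ) else 0) / n - m y| ≤ 1 :=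
      abs_le.2 ⟨by linarith, by linarith⟩
    rw [Real.norm_eq_abs, abs_of_nonneg (sq_nonneg _), ← sq_abs]
    calc |(∑ i, if X i ω = y then (1:ℝ) else 0) / n - m y| ^ 2 ≤ 1 ^ 2 :=
          pow_le_pow_left₀ (abs_nonneg _) habs 2
      _ = 1 := one_pow 2
  -- the key bound, for every κ
  have key : ∀ κ : ℝ, ∫ ω, (sSup ((fun α =>
      |fdual (fun y => (∑ i, if X i ω = y then (1 : ℝ) else 0) / n) u δ α -
        fdual m u δ α|) '' Set.Ici 0)) ^ 2 ∂P ≤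
      16 * (linfNorm m (fun y => u y - κ)) ^ 2 / (p ^ 2 * n) := by
    intro κ
    set c : ℝ := linfNorm m (fun y => u y - κ) with hcdef
    have hc : 0 ≤ c := linf_nonneg _ hm1
    have hptbound : ∀ᵐ ω ∂P, (sSup ((fun α =>
        |fdual (fun y => (∑ i, if X i ω = y then (1 : ℝ) else 0) / n) u δ α -
          fdual m u δ α|) '' Set.Ici 0)) ^ 2 ≤
        (16 * c ^ 2 / p ^ 2) * ∑ y, ((∑ i, if X i ω = y then (1:ℝ) else 0) / n - m y) ^ 2 := by
      filter_upwards [ae_supp P μ X hmeas hlaw] with ω hω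
      set ν : Y → ℝ := fun y => (∑ i, if X i ω = y then (1:ℝ) else 0) / n with hνdef
      have hsupp : ∀ y, ν y ≠ 0 → m y ≠ 0 := by
        intro y hy
        by_contra hmy
        apply hy
        rw [hνdef]
        have hno : ∀ i : Fin n, X i ω ≠ y := by
          intro i hi
          exact hω i (by rw [hi] at *; exact hmy)
        simp only []
        rw [Finset.sum_eq_zero fun i _ => by simp [hno i], zero_div]
      set Z : ℝ := Finset.univ.sup' Finset.univ_nonempty (fun y => |ν y - m y|) with hZdef
      have hZdev : ∀ y, |ν y - m y| ≤ Z := fun y => by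
        rw [hZdef]; exact Finset.le_sup' (fun y => |ν y - m y|) (Finset.mem_univ y)
      have hZ0 : 0 ≤ Z :=
        le_trans (abs_nonneg _) (hZdev (Classical.arbitrary Y))
      have hZsq : Z ^ 2 ≤ ∑ y, (ν y - m y) ^ 2 := by
        obtain ⟨y', _, hy'⟩ := Finset.exists_mem_eq_sup' Finset.univ_nonempty
          (fun y => |ν y - m y|)
        rw [hZdef, hy', sq_abs]
        exact Finset.single_le_sum (fun y _ => sq_nonneg (ν y - m y)) (Finset.mem_univ y')
      have hD0 : 0 ≤ sSup ((fun α => |fdual ν u δ α - fdual m u δ α|) '' Set.Ici 0) := by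
        apply Real.sSup_nonneg
        rintro x ⟨α, hα, rfl⟩
        exact abs_nonneg _
      rcases le_or_gt Z p with hZp | hZp
      · have hDle : sSup ((fun α => |fdual ν u δ α - fdual m u δ α|) '' Set.Ici 0) ≤
            4 * c * Z / p := by
          apply Real.sSup_le
          · rintro x ⟨α, hα, rfl⟩
            exact fdual_fine m ν u δ κ p Z hp hα hm0 hm1 (fun y => hν0 ω y) (hν1 ω)
              hsupp hmp hZdev hZp
          · positivity
        calc (sSup ((fun α => |fdual ν u δ α - fdual m u δ α|) '' Set.Ici 0)) ^ 2
            ≤ (4 * c * Z / p) ^ 2 := pow_le_pow_left₀ hD0 hDle 2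
          _ = (16 * c ^ 2 / p ^ 2) * Z ^ 2 := by field_simp; ring
          _ ≤ (16 * c ^ 2 / p ^ 2) * ∑ y, (ν y - m y) ^ 2 :=
              mul_le_mul_of_nonneg_left hZsq (by positivity)
      · have hDle : sSup ((fun α => |fdual ν u δ α - fdual m u δ α|) '' Set.Ici 0) ≤
            2 * c := by
          apply Real.sSup_le
          · rintro x ⟨α, hα, rfl⟩
            exact fdual_crude m ν u δ κ hα hm0 hm1 (fun y => hν0 ω y) (hν1 ω) hsupp
          · positivity
        have hZp2 : p ^ 2 ≤ Z ^ 2 := pow_le_pow_left₀ hp.le hZp.le 2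
        calc (sSup ((fun α => |fdual ν u δ α - fdual m u δ α|) '' Set.Ici 0)) ^ 2
            ≤ (2 * c) ^ 2 := pow_le_pow_left₀ hD0 hDle 2
          _ ≤ (16 * c ^ 2 / p ^ 2) * p ^ 2 := by
              have h5 : (16 * c ^ 2 / p ^ 2) * p ^ 2 = 16 * c ^ 2 := by field_simp
              rw [h5]
              nlinarith [sq_nonneg c]
          _ ≤ (16 * c ^ 2 / p ^ 2) * Z ^ 2 :=
              mul_le_mul_of_nonneg_left hZp2 (by positivity)
          _ ≤ (16 * c ^ 2 / p ^ 2) * ∑ y, (ν y - m y) ^ 2 :=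
              mul_le_mul_of_nonneg_left hZsq (by positivity)
    have hgint : Integrable (fun ω =>
        (16 * c ^ 2 / p ^ 2) * ∑ y, ((∑ i, if X i ω = y then (1:ℝ) else 0) / n - m y) ^ 2) P :=
      (integrable_finset_sum _ fun y _ => hdevint y).const_mul _
    calc ∫ ω, (sSup ((fun α =>
        |fdual (fun y => (∑ i, if X i ω = y then (1 : ℝ) else 0) / n) u δ α -
          fdual m u δ α|) '' Set.Ici 0)) ^ 2 ∂P
        ≤ ∫ ω, (16 * c ^ 2 / p ^ 2) *
            ∑ y, ((∑ i, if X i ω = y then (1:ℝ) else 0) / n - m y) ^ 2 ∂P :=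
          integral_mono_of_nonneg (ae_of_all _ fun ω => sq_nonneg _) hgint hptbound
      _ = (16 * c ^ 2 / p ^ 2) *
            ∑ y, ∫ ω, ((∑ i, if X i ω = y then (1:ℝ) else 0) / n - m y) ^ 2 ∂P := by
          rw [integral_const_mul, integral_finset_sum _ fun y _ => hdevint y]
      _ ≤ (16 * c ^ 2 / p ^ 2) * ∑ y, m y / n := by
          apply mul_le_mul_of_nonneg_left _ (by positivity)
          exact Finset.sum_le_sum fun y _ => var_bound P μ hn X hmeas hindep hlaw y
      _ = 16 * c ^ 2 / (p ^ 2 * n) := by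
          rw [← Finset.sum_div, hm1]
          field_simp
    -- end key
  by_cases hcard : Fintype.card Y = 1
  · -- singleton case : integrand is zero
    have hsub : ∀ a b : Y, a = b := by
      intro a b
      have := Fintype.card_le_one_iff.1 (le_of_eq hcard)
      exact this a b
    have hzero : ∀ ω, (sSup ((fun α =>
        |fdual (fun y => (∑ i, if X i ω = y then (1 : ℝ) else 0) / n) u δ α -
          fdual m u δ α|) '' Set.Ici 0)) ^ 2 = 0 := by
      intro ω
      have hνm : (fun y => (∑ i, if X i ω = y then (1 : ℝ) else 0) / n) = m := by
        funext y
        have hXi : ∀ i : Fin n, X i ω = y := fun i => hsub _ _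
        have h1 : (∑ i, if X i ω = y then (1 : ℝ) else 0) / n = 1 := by
          rw [Finset.sum_congr rfl fun i _ => if_pos (hXi i)]
          simp [Finset.sum_const, Finset.card_univ]
          omega
        have h2 : m y = 1 := by
          have huniv : (Finset.univ : Finset Y) = {y} :=
            (Finset.eq_of_subset_of_card_le (Finset.singleton_subset_iff.2 (Finset.mem_univ y))
              (by rw [Finset.card_univ, hcard, Finset.card_singleton])).symm
          have : ∑ y', m y' = m y := by rw [huniv, Finset.sum_singleton]
          rw [← this, hm1]
        rw [h1, h2]
      rw [hνm]
      have him : (fun α => |fdual m u δ α - fdual m u δ α|) '' Set.Ici 0 = {0} := by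
        have : (fun α => |fdual m u δ α - fdual m u δ α|) = fun _ => (0:ℝ) := by
          funext α; rw [sub_self, abs_zero]
        rw [this]
        exact Set.Nonempty.image_const ⟨0, Set.mem_Ici.2 le_rfl⟩ 0
      rw [him, csSup_singleton]
      norm_num
    rw [integral_congr_ae (ae_of_all _ fun ω => hzero ω)]
    rw [integral_zero]
    apply div_nonneg
    apply mul_nonneg
    apply mul_nonneg (by norm_num) (sq_nonneg _)
    · apply Real.log_nonneg
      have h1 : (1:ℝ) ≤ Real.exp 1 := by
        have := Real.add_one_le_exp (1:ℝ)
        linarith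
      have h2 : (1:ℝ) ≤ (Fintype.card Y : ℝ) := by
        exact_mod_cast Fintype.card_pos
      nlinarith
    · positivity
  · -- card ≥ 2
    have hcard2 : 2 ≤ Fintype.card Y := by
      have := Fintype.card_pos (α := Y)
      omega
    have hlog : 16 / 13 ≤ Real.log (Real.exp 1 * Fintype.card Y) := by
      have hcardpos : (0:ℝ) < (Fintype.card Y : ℝ) := by
        exact_mod_cast Fintype.card_pos
      rw [Real.log_mul (Real.exp_ne_zero 1) hcardpos.ne', Real.log_exp]
      have h2 : Real.log 2 ≤ Real.log (Fintype.card Y) := by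
        apply Real.log_le_log (by norm_num)
        exact_mod_cast hcard2
      have h3 := Real.log_two_gt_d9
      linarith
    set L : ℝ := Real.log (Real.exp 1 * Fintype.card Y) with hLdef
    have hLpos : 0 < L := lt_of_lt_of_le (by norm_num) hlog
    set R : ℝ := 13 * L / (p ^ 2 * n) with hRdef
    have hRpos : 0 < R := by rw [hRdef]; positivity
    set I : ℝ := ∫ ω, (sSup ((fun α =>
        |fdual (fun y => (∑ i, if X i ω = y then (1 : ℝ) else 0) / n) u δ α -
          fdual m u δ α|) '' Set.Ici 0)) ^ 2 ∂P with hIdef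
    have hI0 : 0 ≤ I := integral_nonneg fun ω => sq_nonneg _
    have hstep : ∀ κ : ℝ, I ≤ R * (linfNorm m (fun y => u y - κ)) ^ 2 := by
      intro κ
      refine le_trans (key κ) ?_
      have h1 : 16 * (linfNorm m (fun y => u y - κ)) ^ 2 / (p ^ 2 * n) =
          ((linfNorm m (fun y => u y - κ)) ^ 2 / (p ^ 2 * n)) * 16 := by ring
      have h2 : R * (linfNorm m (fun y => u y - κ)) ^ 2 =
          ((linfNorm m (fun y => u y - κ)) ^ 2 / (p ^ 2 * n)) * (13 * L) := by
        rw [hRdef]; ring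
      rw [h1, h2]
      apply mul_le_mul_of_nonneg_left _ (by positivity)
      linarith
    have hsqrt : Real.sqrt (I / R) ≤ spanNorm m u := by
      apply le_csInf (Set.range_nonempty _)
      rintro b ⟨κ, rfl⟩
      have hb0 : 0 ≤ linfNorm m (fun y => u y - κ) := linf_nonneg _ hm1
      have h1 : I / R ≤ (linfNorm m (fun y => u y - κ)) ^ 2 :=
        (div_le_iff₀ hRpos).2 (by linarith [hstep κ, mul_comm R ((linfNorm m (fun y => u y - κ)) ^ 2)])
      calc Real.sqrt (I / R) ≤ Real.sqrt ((linfNorm m (fun y => u y - κ)) ^ 2) :=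
            Real.sqrt_le_sqrt h1
        _ = linfNorm m (fun y => u y - κ) := by
            rw [Real.sqrt_sq hb0]
    have hfin : I / R ≤ (spanNorm m u) ^ 2 := by
      have h1 : (Real.sqrt (I / R)) ^ 2 ≤ (spanNorm m u) ^ 2 :=
        pow_le_pow_left₀ (Real.sqrt_nonneg _) hsqrt 2
      rwa [Real.sq_sqrt (div_nonneg hI0 hRpos.le)] at h1
    have : I ≤ R * (spanNorm m u) ^ 2 := by
      rw [← mul_comm]
      exact (div_le_iff₀ hRpos).1 hfin
    calc I ≤ R * (spanNorm m u) ^ 2 := this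
      _ = 13 * spanNorm m u ^ 2 * L / (p ^ 2 * n) := by rw [hRdef]; ring
end
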